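/- arXiv:math/0406361 — 5 statements merged into one kernel-verified Lean document; each statement's English description precedes it below -/
import Mathlib

section
/- Let X be a path-connected topological space and let π : PX → X × X be the map sending a path γ to (γ(0), γ(1)), where PX is the space of continuous paths [0,1] → X with the compact-open topology. Then there exists a continuous section s : X × X → PX of π (i.e., π ∘ s = id) if and only if X is contractible. -/
/-- For a path-connected space `X`, the endpoint fibration
`π : C([0,1], X) → X × X`, `γ ↦ (γ 0, γ 1)`, admits a continuous
(global) section if and only if `X` is contractible. -/
theorem exists_continuous_section_iff_contractible
    (X : Type*) [TopologicalSpace X] [PathConnectedSpace X] :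
    (∃ s : C(X × X, C(unitInterval, X)),
      ∀ p : X × X, (s p) 0 = p.1 ∧ (s p) 1 = p.2) ↔ ContractibleSpace X := by
  constructor
  · rintro ⟨s, hs⟩
    have x0 : X := Nonempty.some inferInstance
    rw [contractible_iff_id_nullhomotopic]
    refine ⟨x0, Nonempty.intro ?_⟩
    refine
      { toFun := fun q => s (q.2, x0) q.1
        continuous_toFun := ?_
        map_zero_left := fun x => (hs (x, x0)).1
        map_one_left := fun x => (hs (x, x0)).2 }
    have hc : Continuous fun q : (X × X) × unitInterval => s q.1 q.2 :=
      ContinuousMap.continuous_uncurry_of_continuous s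
    exact hc.comp (((continuous_snd.prodMk continuous_const).prodMk continuous_fst) : Continuous fun q : unitInterval × X => ((q.2, x0), q.1))
  · intro hX
    obtain ⟨x0, hh⟩ := id_nullhomotopic X
    obtain ⟨H⟩ := hh
    have hHc : Continuous fun q : X × unitInterval => H (q.2, q.1) :=
      H.continuous.comp (by fun_prop)
    let γ : ∀ x : X, Path x x0 := fun x =>
      { toFun := fun t => H (t, x)
        continuous_toFun := H.continuous.comp (by fun_prop)
        source' := H.apply_zero x
        target' := H.apply_one x }
    have h₁ : Continuous ↿(fun p : X × X => γ p.1) := by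
      show Continuous fun q : (X × X) × unitInterval => H (q.2, q.1.1)
      exact H.continuous.comp (by fun_prop)
    have h₂ : Continuous ↿(fun p : X × X => (γ p.2).symm) := by
      show Continuous fun q : (X × X) × unitInterval => H (unitInterval.symm q.2, q.1.2)
      exact H.continuous.comp (by fun_prop)
    let F : ∀ p : X × X, Path p.1 p.2 := fun p => (γ p.1).trans (γ p.2).symm
    have hF : Continuous ↿F := Path.trans_continuous_family _ h₁ _ h₂
    refine ⟨⟨fun p => (F p).toContinuousMap,
      ContinuousMap.continuous_of_continuous_uncurry _ hF⟩, fun p => ?_⟩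
    exact ⟨(F p).source, (F p).target⟩
end

section
/- Let X be a topological space and k a field. Suppose u₁,…,u_m, w₁,…,w_m ∈ H¹(X; k) are degree-one cohomology classes satisfying u_i ∪ w_j = 0 for all i, j = 1,…,m, and such that the cup products u₁∪⋯∪u_m and w₁∪⋯∪w_m are linearly independent elements of H^m(X; k). Then the product (1⊗u₁ − u₁⊗1)⋯(1⊗u_m − u_m⊗1)(1⊗w₁ − w₁⊗1)⋯(1⊗w_m − w_m⊗1) is a nonzero element of the graded tensor product algebra H*(X; k) ⊗ H*(X; k). -/
/-!
Write `α x = 1 ⊗ x - x ⊗ 1`, `U = u₁⋯u_m` and `W = w₁⋯w_m`. Expanding,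
`α u₁ ⋯ α u_m = ±U ⊗ 1 + 1 ⊗ U + ν`, where `ν` is a combination of tensors `x ⊗ y` of
homogeneous elements with `x w_j = y w_j = 0` for all `j` (products of nonempty subwords of
the `u_i`). Every such tensor is killed by `α w₁`, while `U w_j = 0` makes right
multiplication by `α w₁ ⋯ α w_m` send `U ⊗ 1` to `U ⊗ W` and `1 ⊗ U` to `±W ⊗ U`. Hence the
product is `±U ⊗ W ± W ⊗ U`, which is nonzero because `U` and `W` are linearly independent.
-/

open TensorProduct GradedTensorProduct SetLike

theorem List.prod_mul_eq_zero_of_forall {R : Type*} [MonoidWithZero R] {l : List R} {c : R}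
    (hl : l ≠ []) (h : ∀ x ∈ l, x * c = 0) : l.prod * c = 0 := by
  obtain ⟨l, x, rfl⟩ := (l.eq_nil_or_concat'.resolve_left hl)
  rw [List.prod_append, List.prod_singleton, mul_assoc, h x (by simp), mul_zero]

theorem LinearIndependent.pair_tmul_swap {k M : Type*} [CommRing k] [IsDomain k]
    [AddCommGroup M] [Module k M] {a b : M} (h : LinearIndependent k ![a, b]) :
    LinearIndependent k ![a ⊗ₜ[k] b, b ⊗ₜ[k] a] := by
  have hinj : Function.Injective ![((0 : Fin 2), (1 : Fin 2)), (1, 0)] := by decide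
  convert (h.tmul_of_isDomain h).comp _ hinj using 1
  ext i
  fin_cases i <;> rfl

noncomputable section

variable {k A : Type*} [CommRing k] [Ring A] [Algebra k A]
variable (𝒜 : ℕ → Submodule k A) [GradedAlgebra 𝒜]

def zeroDivisor (x : A) : 𝒜 ᵍ⊗[k] 𝒜 := (1 : A) ᵍ⊗ₜ[k] x - x ᵍ⊗ₜ[k] (1 : A)

def homogeneousLeftAnnihilator (W : Set A) : Set A :=
  {x | IsHomogeneousElem 𝒜 x ∧ ∀ c ∈ W, x * c = 0}

def annihilatingTensors (W : Set A) : Submodule k (𝒜 ᵍ⊗[k] 𝒜) :=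
  Submodule.span k <| Set.image2 (fun x y => x ᵍ⊗ₜ[k] y)
    (homogeneousLeftAnnihilator 𝒜 W) (homogeneousLeftAnnihilator 𝒜 W)

variable {𝒜}

theorem tmul_mul_tmul_of_mem {i j : ℕ} (a : A) {x y : A} (hx : x ∈ 𝒜 i) (hy : y ∈ 𝒜 j)
    (b : A) :
    (a ᵍ⊗ₜ[k] x * y ᵍ⊗ₜ[k] b : 𝒜 ᵍ⊗[k] 𝒜) = (-1 : k) ^ (i * j) • (a * y) ᵍ⊗ₜ[k] (x * b) := by
  rw [tmul_coe_mul_coe_tmul 𝒜 𝒜 a ⟨x, hx⟩ ⟨y, hy⟩ b, Units.smul_def,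
    ← Int.cast_smul_eq_zsmul k]
  push_cast
  rfl

theorem tmul_mul_tmul_eq_zero {a b x y : A} (hx : IsHomogeneousElem 𝒜 x)
    (hy : IsHomogeneousElem 𝒜 y) (h : a * y = 0 ∨ x * b = 0) :
    (a ᵍ⊗ₜ[k] x * y ᵍ⊗ₜ[k] b : 𝒜 ᵍ⊗[k] 𝒜) = 0 := by
  obtain ⟨i, hx⟩ := hx
  obtain ⟨j, hy⟩ := hy
  rcases h with h | h <;> simp [tmul_mul_tmul_of_mem a hx hy b, h, GradedTensorProduct.tmul]

theorem tmul_mem_annihilatingTensors {W : Set A} {x y : A}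
    (hx : x ∈ homogeneousLeftAnnihilator 𝒜 W) (hy : y ∈ homogeneousLeftAnnihilator 𝒜 W) :
    x ᵍ⊗ₜ[k] y ∈ annihilatingTensors 𝒜 W :=
  Submodule.subset_span (Set.mem_image2_of_mem hx hy)

theorem homogeneousLeftAnnihilator.mul {W : Set A} {a x : A} (ha : IsHomogeneousElem 𝒜 a)
    (hx : x ∈ homogeneousLeftAnnihilator 𝒜 W) : a * x ∈ homogeneousLeftAnnihilator 𝒜 W :=
  ⟨ha.mul hx.1, fun c hc => by rw [mul_assoc, hx.2 c hc, mul_zero]⟩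

theorem tmul_mul_mem_annihilatingTensors {W : Set A} {a b : A} {ν : 𝒜 ᵍ⊗[k] 𝒜}
    (ha : IsHomogeneousElem 𝒜 a) (hb : IsHomogeneousElem 𝒜 b)
    (hν : ν ∈ annihilatingTensors 𝒜 W) : a ᵍ⊗ₜ[k] b * ν ∈ annihilatingTensors 𝒜 W := by
  induction hν using Submodule.span_induction with
  | mem _ h =>
    obtain ⟨x, hx, y, hy, rfl⟩ := h
    obtain ⟨d, hb⟩ := hb
    obtain ⟨i, hxi⟩ := hx.1
    rw [tmul_mul_tmul_of_mem a hb hxi y]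
    exact Submodule.smul_mem _ _ (tmul_mem_annihilatingTensors
      (homogeneousLeftAnnihilator.mul ha hx) (homogeneousLeftAnnihilator.mul ⟨d, hb⟩ hy))
  | zero => simp
  | add _ _ _ _ h₁ h₂ => rw [mul_add]; exact add_mem h₁ h₂
  | smul r _ _ h => rw [mul_smul_comm]; exact Submodule.smul_mem _ r h

theorem zeroDivisor_mul_mem_annihilatingTensors {W : Set A} {x : A} {ν : 𝒜 ᵍ⊗[k] 𝒜}
    (hx : IsHomogeneousElem 𝒜 x) (hν : ν ∈ annihilatingTensors 𝒜 W) :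
    zeroDivisor 𝒜 x * ν ∈ annihilatingTensors 𝒜 W := by
  rw [zeroDivisor, sub_mul]
  exact sub_mem (tmul_mul_mem_annihilatingTensors (isHomogeneousElem_one 𝒜) hx hν)
    (tmul_mul_mem_annihilatingTensors hx (isHomogeneousElem_one 𝒜) hν)

theorem mul_zeroDivisor_eq_zero_of_mem_annihilatingTensors {W : Set A} {w : A}
    {ν : 𝒜 ᵍ⊗[k] 𝒜} (hw : IsHomogeneousElem 𝒜 w) (hwW : w ∈ W)
    (hν : ν ∈ annihilatingTensors 𝒜 W) : ν * zeroDivisor 𝒜 w = 0 := by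
  induction hν using Submodule.span_induction with
  | mem _ h =>
    obtain ⟨x, hx, y, hy, rfl⟩ := h
    rw [zeroDivisor, mul_sub,
      tmul_mul_tmul_eq_zero hy.1 (isHomogeneousElem_one 𝒜) (.inr (hy.2 w hwW)),
      tmul_mul_tmul_eq_zero hy.1 hw (.inl (hx.2 w hwW)), sub_zero]
  | zero => simp
  | add _ _ _ _ h₁ h₂ => rw [add_mul, h₁, h₂, add_zero]
  | smul r _ _ h => rw [smul_mul_assoc, h, smul_zero]

theorem mul_prod_zeroDivisor_eq_zero_of_mem_annihilatingTensors {W : Set A} {l : List A}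
    {ν : 𝒜 ᵍ⊗[k] 𝒜} (hl : l ≠ []) (hlh : ∀ x ∈ l, IsHomogeneousElem 𝒜 x)
    (hlW : ∀ x ∈ l, x ∈ W) (hν : ν ∈ annihilatingTensors 𝒜 W) :
    ν * (l.map (zeroDivisor 𝒜)).prod = 0 := by
  obtain ⟨x, l, rfl⟩ := List.exists_cons_of_ne_nil hl
  rw [List.map_cons, List.prod_cons, ← mul_assoc,
    mul_zeroDivisor_eq_zero_of_mem_annihilatingTensors (hlh x (by simp)) (hlW x (by simp)) hν,
    zero_mul]

theorem prod_zeroDivisor_sub_mem_annihilatingTensors {W : Set A} {l : List A} (hl : l ≠ [])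
    (hl₁ : ∀ x ∈ l, x ∈ 𝒜 1) (hlW : ∀ x ∈ l, ∀ c ∈ W, x * c = 0) :
    (l.map (zeroDivisor 𝒜)).prod -
        ((-1 : k) ^ l.length • l.prod ᵍ⊗ₜ[k] (1 : A) + (1 : A) ᵍ⊗ₜ[k] l.prod) ∈
      annihilatingTensors 𝒜 W := by
  induction l with
  | nil => exact absurd rfl hl
  | cons x t ih =>
    obtain rfl | ht := eq_or_ne t []
    · simp only [List.map_cons, List.map_nil, List.prod_cons, List.prod_nil, mul_one,
        List.length_singleton, pow_one, neg_one_smul, zeroDivisor]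
      convert (annihilatingTensors 𝒜 W).zero_mem using 1
      abel
    have hx : x ∈ 𝒜 1 := hl₁ x (by simp)
    have hT : t.prod ∈ 𝒜 t.length := by
      simpa using list_prod_map_mem_graded t (fun _ => 1) id fun y hy => hl₁ y (by simp [hy])
    have hTW : t.prod ∈ homogeneousLeftAnnihilator 𝒜 W := ⟨⟨_, hT⟩, fun c hc =>
      List.prod_mul_eq_zero_of_forall ht fun y hy => hlW y (by simp [hy]) c hc⟩
    have hxW : x ∈ homogeneousLeftAnnihilator 𝒜 W := ⟨⟨1, hx⟩, hlW x (by simp)⟩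
    obtain ⟨ν, hν, hP⟩ : ∃ ν ∈ annihilatingTensors 𝒜 W, (t.map (zeroDivisor 𝒜)).prod =
        (-1 : k) ^ t.length • t.prod ᵍ⊗ₜ[k] (1 : A) + (1 : A) ᵍ⊗ₜ[k] t.prod + ν :=
      ⟨_, ih ht (fun y hy => hl₁ y (by simp [hy])) (fun y hy => hlW y (by simp [hy])),
        (add_sub_cancel _ _).symm⟩
    have key : (-1 : k) ^ (t.length + t.length) • t.prod ᵍ⊗ₜ[k] x - x ᵍ⊗ₜ[k] t.prod
        + zeroDivisor 𝒜 x * ν ∈ annihilatingTensors 𝒜 W :=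
      add_mem (sub_mem (Submodule.smul_mem _ _ (tmul_mem_annihilatingTensors hTW hxW))
        (tmul_mem_annihilatingTensors hxW hTW))
        (zeroDivisor_mul_mem_annihilatingTensors ⟨1, hx⟩ hν)
    have e₁ : zeroDivisor 𝒜 x * t.prod ᵍ⊗ₜ[k] (1 : A) =
        (-1 : k) ^ t.length • t.prod ᵍ⊗ₜ[k] x - (x * t.prod) ᵍ⊗ₜ[k] (1 : A) := by
      rw [zeroDivisor, sub_mul, tmul_mul_tmul_of_mem 1 hx hT, tmul_one_mul_coe_tmul 𝒜 𝒜 x ⟨_, hT⟩,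
        one_mul, one_mul, mul_one]
    have e₂ : zeroDivisor 𝒜 x * (1 : A) ᵍ⊗ₜ[k] t.prod =
        (1 : A) ᵍ⊗ₜ[k] (x * t.prod) - x ᵍ⊗ₜ[k] t.prod := by
      rw [zeroDivisor, sub_mul, tmul_coe_mul_one_tmul 𝒜 𝒜 1 ⟨x, hx⟩, tmul_one_mul_one_tmul]
    convert key using 1
    rw [List.map_cons, List.prod_cons, hP, mul_add, mul_add, mul_smul_comm, e₁, e₂,
      List.prod_cons, List.length_cons, pow_add, pow_succ, smul_sub, smul_smul]
    module

theorem tmul_mul_prod_zeroDivisor_of_left_mul_eq_zero {a b : A} {l : List A}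
    (hb : IsHomogeneousElem 𝒜 b) (hl : ∀ x ∈ l, IsHomogeneousElem 𝒜 x)
    (ha : ∀ x ∈ l, a * x = 0) :
    a ᵍ⊗ₜ[k] b * (l.map (zeroDivisor 𝒜)).prod = a ᵍ⊗ₜ[k] (b * l.prod) := by
  induction l generalizing b with
  | nil => simp
  | cons x t ih =>
    obtain ⟨j, hbj⟩ := hb
    rw [List.map_cons, List.prod_cons, ← mul_assoc, zeroDivisor, mul_sub,
      tmul_coe_mul_one_tmul 𝒜 𝒜 a ⟨b, hbj⟩,
      tmul_mul_tmul_eq_zero ⟨j, hbj⟩ (hl x (by simp)) (.inl (ha x (by simp))), sub_zero,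
      ih (IsHomogeneousElem.mul ⟨j, hbj⟩ (hl x (by simp)))
        (fun y hy => hl y (by simp [hy])) (fun y hy => ha y (by simp [hy])),
      List.prod_cons, mul_assoc]

theorem tmul_mul_prod_zeroDivisor_of_right_mul_eq_zero {a b : A} {d : ℕ} {l : List A}
    (hb : b ∈ 𝒜 d) (hl : ∀ x ∈ l, x ∈ 𝒜 1) (hbl : ∀ x ∈ l, b * x = 0) :
    a ᵍ⊗ₜ[k] b * (l.map (zeroDivisor 𝒜)).prod =
      (-1 : k) ^ ((d + 1) * l.length) • (a * l.prod) ᵍ⊗ₜ[k] b := by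
  induction l generalizing a with
  | nil => simp
  | cons x t ih =>
    have step : a ᵍ⊗ₜ[k] b * zeroDivisor 𝒜 x = (-1 : k) ^ (d + 1) • (a * x) ᵍ⊗ₜ[k] b := by
      rw [zeroDivisor, mul_sub, tmul_coe_mul_one_tmul 𝒜 𝒜 a ⟨b, hb⟩, hbl x (by simp),
        tmul_mul_tmul_of_mem a hb (hl x (by simp)), mul_one, mul_one, pow_succ]
      simp [GradedTensorProduct.tmul]
    rw [List.map_cons, List.prod_cons, ← mul_assoc, step, smul_mul_assoc,
      ih (fun y hy => hl y (by simp [hy])) (fun y hy => hbl y (by simp [hy])), smul_smul,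
      ← pow_add, List.prod_cons, List.length_cons, mul_assoc, Nat.mul_succ, add_comm]

theorem smul_tmul_add_smul_tmul_swap_ne_zero [IsDomain k] {a b : A}
    (h : LinearIndependent k ![a, b]) {s t : k} (ht : t ≠ 0) :
    s • (a ᵍ⊗ₜ[k] b : 𝒜 ᵍ⊗[k] 𝒜) + t • b ᵍ⊗ₜ[k] a ≠ 0 := by
  intro H
  have H' := congrArg (of k 𝒜 𝒜).symm H
  rw [map_add, map_smul, map_smul, map_zero] at H'
  exact ht (LinearIndependent.pair_iff.1 h.pair_tmul_swap s t H').2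

end

theorem prod_zero_divisors_ne_zero_general
    (k : Type*) [Field k] (A : Type*) [Ring A] [Algebra k A]
    (𝒜 : ℕ → Submodule k A) [GradedAlgebra 𝒜]
    (m : ℕ) (u w : Fin m → A)
    (hu : ∀ i, u i ∈ 𝒜 1) (hw : ∀ j, w j ∈ 𝒜 1)
    (huw : ∀ i j, u i * w j = 0)
    (hind : LinearIndependent k ![(List.ofFn u).prod, (List.ofFn w).prod]) :
    (List.ofFn fun i => ((1 : A) ᵍ⊗ₜ[k] u i - u i ᵍ⊗ₜ[k] (1 : A) : 𝒜 ᵍ⊗[k] 𝒜)).prod *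
    (List.ofFn fun j => ((1 : A) ᵍ⊗ₜ[k] w j - w j ᵍ⊗ₜ[k] (1 : A) : 𝒜 ᵍ⊗[k] 𝒜)).prod
      ≠ 0 := by
  have hm : m ≠ 0 := by
    rintro rfl
    exact absurd (hind.injective (a₁ := 0) (a₂ := 1) (by simp)) (by decide)
  have hu_ne : List.ofFn u ≠ [] := List.ofFn_eq_nil_iff.not.2 hm
  have hw_ne : List.ofFn w ≠ [] := List.ofFn_eq_nil_iff.not.2 hm
  have hu₁ : ∀ x ∈ List.ofFn u, x ∈ 𝒜 1 := List.forall_mem_ofFn_iff.2 hu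
  have hw₁ : ∀ x ∈ List.ofFn w, x ∈ 𝒜 1 := List.forall_mem_ofFn_iff.2 hw
  have huW : ∀ x ∈ List.ofFn u, ∀ c ∈ Set.range w, x * c = 0 :=
    List.forall_mem_ofFn_iff.2 fun i => Set.forall_mem_range.2 (huw i)
  have hUw : ∀ x ∈ List.ofFn w, (List.ofFn u).prod * x = 0 :=
    List.forall_mem_ofFn_iff.2 fun j =>
      List.prod_mul_eq_zero_of_forall hu_ne fun x hx => huW x hx _ ⟨j, rfl⟩
  have hU : (List.ofFn u).prod ∈ 𝒜 m := by
    simpa using list_prod_ofFn_mem_graded (fun _ => 1) u hu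
  change (List.ofFn (zeroDivisor 𝒜 ∘ u)).prod * (List.ofFn (zeroDivisor 𝒜 ∘ w)).prod ≠ 0
  rw [← List.map_ofFn, ← List.map_ofFn]
  have hνQ := mul_prod_zeroDivisor_eq_zero_of_mem_annihilatingTensors hw_ne
    (fun x hx => ⟨1, hw₁ x hx⟩) (fun x hx => List.mem_ofFn.1 hx)
    (prod_zeroDivisor_sub_mem_annihilatingTensors hu_ne hu₁ huW)
  rw [← sub_add_cancel ((List.ofFn u).map (zeroDivisor 𝒜)).prod, add_mul, hνQ, zero_add,
    add_mul, smul_mul_assoc,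
    tmul_mul_prod_zeroDivisor_of_left_mul_eq_zero (isHomogeneousElem_one 𝒜)
      (fun x hx => ⟨1, hw₁ x hx⟩) hUw,
    tmul_mul_prod_zeroDivisor_of_right_mul_eq_zero hU hw₁ hUw, one_mul]
  exact smul_tmul_add_smul_tmul_swap_ne_zero hind (pow_ne_zero _ (neg_ne_zero.2 one_ne_zero))

/-- (Lemma on zero-divisors.)  Let `A = H^*(X; k)` be a graded-commutative algebra
over a field `k` (modelling the singular cohomology algebra of a space `X`), and let
`u₁,…,u_m, w₁,…,w_m` be degree-one classes with `u_i ∪ w_j = 0` for all `i, j` and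
such that the cup products `u₁⋯u_m` and `w₁⋯w_m` are linearly independent in degree `m`.
Then the product `(1⊗u₁ − u₁⊗1)⋯(1⊗u_m − u_m⊗1)(1⊗w₁ − w₁⊗1)⋯(1⊗w_m − w_m⊗1)` is
a nonzero element of the graded (sign-commutative) tensor product `A ⊗ A`. -/
theorem prod_zero_divisors_ne_zero
    (k : Type*) [Field k] (A : Type*) [Ring A] [Algebra k A]
    (𝒜 : ℕ → Submodule k A) [GradedAlgebra 𝒜]
    (hcomm : ∀ (i j : ℕ) (a b : A), a ∈ 𝒜 i → b ∈ 𝒜 j →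
      a * b = ((-1 : ℤ) ^ (i * j)) • (b * a))
    (m : ℕ) (u w : Fin m → A)
    (hu : ∀ i, u i ∈ 𝒜 1) (hw : ∀ j, w j ∈ 𝒜 1)
    (huw : ∀ i j, u i * w j = 0)
    (hind : LinearIndependent k ![(List.ofFn u).prod, (List.ofFn w).prod]) :
    (List.ofFn fun i => ((1 : A) ᵍ⊗ₜ[k] u i - u i ᵍ⊗ₜ[k] (1 : A) : 𝒜 ᵍ⊗[k] 𝒜)).prod *
    (List.ofFn fun j => ((1 : A) ᵍ⊗ₜ[k] w j - w j ᵍ⊗ₜ[k] (1 : A) : 𝒜 ᵍ⊗[k] 𝒜)).prod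
      ≠ 0 :=
  prod_zero_divisors_ne_zero_general k A 𝒜 m u w hu hw huw hind
end

section
/- Let X be a path-connected metric (or more generally normal) topological space and suppose X × X admits an open cover U₁,…,U_k such that each U_i admits a continuous local section s_i : U_i → PX of the endpoint map π. Then there exists a continuous k-valued random motion planning algorithm in X, i.e., continuous functions p₁,…,p_k : X × X → [0,1] with p₁ + … + p_k = 1 and (possibly discontinuous) maps S_i : X × X → PX with π∘S_i = id such that each S_i is continuous on the set {p_i > 0}, and the closure of {p_i > 0} is contained in U_i. -/
/-!
A partition of unity `pᵢ` subordinate to the cover `Uᵢ` of the paracompact normal space `X × X`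
provides the probabilities. Each local section `sᵢ` on `Uᵢ` is extended to all of `X × X` by an
arbitrary choice of paths outside `Uᵢ` (which exist since `X` is path connected); the extension is
continuous on the open set `Uᵢ`, hence on `{pᵢ > 0}`, whose closure lies in `Uᵢ`.
-/

open Function Set unitInterval

lemma setOf_pos_eq_support {α M : Type*} [Zero M] [PartialOrder M] {f : α → M}
    (hf : ∀ x, 0 ≤ f x) : {x | 0 < f x} = support f := by
  ext x
  exact (hf x).lt_iff_ne'

theorem exists_partition_closure_setOf_pos_subset {Y ι : Type*} [TopologicalSpace Y]
    [NormalSpace Y] [ParacompactSpace Y] [Fintype ι] {U : ι → Set Y}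
    (hU : ∀ i, IsOpen (U i)) (hcover : ⋃ i, U i = univ) :
    ∃ p : ι → Y → ℝ, (∀ i, Continuous (p i)) ∧ (∀ i x, p i x ∈ Icc (0 : ℝ) 1) ∧
      (∀ x, ∑ i, p i x = 1) ∧ ∀ i, closure {x | 0 < p i x} ⊆ U i := by
  obtain ⟨f, hf⟩ := PartitionOfUnity.exists_isSubordinate isClosed_univ U hU hcover.ge
  refine ⟨fun i => f i, fun i => (f i).continuous, fun i x => ⟨f.nonneg i x, f.le_one i x⟩,
    fun x => ?_, fun i => ?_⟩
  · rw [← finsum_eq_sum_of_fintype]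
    exact f.sum_eq_one (mem_univ x)
  · rw [setOf_pos_eq_support (f.nonneg i)]
    exact hf i

theorem exists_endpoint_section_continuousOn {X : Type*} [TopologicalSpace X]
    [PathConnectedSpace X] {U : Set (X × X)} (s : U → C(I, X)) (hs : Continuous s)
    (hends : ∀ q : U, s q 0 = q.1.1 ∧ s q 1 = q.1.2) :
    ∃ S : X × X → C(I, X), (∀ x, S x 0 = x.1 ∧ S x 1 = x.2) ∧ ContinuousOn S U := by
  classical
  let S : X × X → C(I, X) := fun x =>
    if h : x ∈ U then s ⟨x, h⟩ else (PathConnectedSpace.somePath x.1 x.2).toContinuousMap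
  refine ⟨S, fun x => ?_, ?_⟩
  · by_cases h : x ∈ U
    · simpa [S, h] using hends ⟨x, h⟩
    · simp [S, h]
  · have hrestrict : U.domRestrict S = s := by
      funext q
      simp [S]
    rw [continuousOn_iff_continuous_domRestrict, hrestrict]
    exact hs

/-- If `X` is a path-connected metric space and `X × X` admits a finite open cover
`U₁,…,U_k` over each of which the endpoint map `π : C([0,1],X) → X × X` has a
continuous local section, then there is a continuous `k`-valued random motion
planning algorithm: continuous `p_i : X × X → [0,1]` summing to `1`, and sections
`S_i : X × X → PX` of `π`, each continuous on `{p_i > 0}`, with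
`closure {p_i > 0} ⊆ U_i`. -/
theorem exists_random_motion_planning_algorithm
    (X : Type*) [MetricSpace X] [PathConnectedSpace X]
    (n : ℕ) (U : Fin n → Set (X × X))
    (hopen : ∀ i, IsOpen (U i)) (hcover : (⋃ i, U i) = Set.univ)
    (hsec : ∀ i, ∃ s : U i → C(unitInterval, X), Continuous s ∧
      ∀ q : U i, (s q) 0 = (q : X × X).1 ∧ (s q) 1 = (q : X × X).2) :
    ∃ (p : Fin n → (X × X) → ℝ) (S : Fin n → (X × X) → C(unitInterval, X)),
      (∀ i, Continuous (p i)) ∧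
      (∀ i x, p i x ∈ Set.Icc (0 : ℝ) 1) ∧
      (∀ x, ∑ i, p i x = 1) ∧
      (∀ i x, (S i x) 0 = x.1 ∧ (S i x) 1 = x.2) ∧
      (∀ i, ContinuousOn (S i) {x | 0 < p i x}) ∧
      (∀ i, closure {x | 0 < p i x} ⊆ U i) := by
  obtain ⟨p, hp_cont, hp_mem, hp_sum, hp_closure⟩ :=
    exists_partition_closure_setOf_pos_subset hopen hcover
  have hS : ∀ i, ∃ S : X × X → C(I, X), (∀ x, S x 0 = x.1 ∧ S x 1 = x.2) ∧ ContinuousOn S (U i) :=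
    fun i => by
      obtain ⟨s, hs, hends⟩ := hsec i
      exact exists_endpoint_section_continuousOn s hs hends
  choose S hS_ends hS_cont using hS
  exact ⟨p, S, hp_cont, hp_mem, hp_sum, hS_ends,
    fun i => (hS_cont i).mono (subset_closure.trans (hp_closure i)), hp_closure⟩
end

section
/- Let X be a path-connected topological space and suppose there exists an n-valued random motion planning algorithm in X, i.e., continuous maps p₁,…,p_n : X × X → [0,1] with Σ p_j = 1, and maps s_j defined and continuous on U_j := p_j⁻¹((0,1]) with values in PX satisfying π ∘ s_j = id on U_j. Then the sets U₁,…,U_n form an open cover of X × X, each admitting a continuous local section of π; hence TC(X) ≤ n. -/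
/-- `X × X` can be covered by `r` open sets over each of which the endpoint
fibration `π : C([0,1], X) → X × X` admits a continuous local section. -/
def HasTCCover (X : Type*) [TopologicalSpace X] (r : ℕ) : Prop :=
  ∃ U : Fin r → Set (X × X), (∀ i, IsOpen (U i)) ∧ (⋃ i, U i) = Set.univ ∧
    ∀ i, ∃ s : U i → C(unitInterval, X), Continuous s ∧
      ∀ p : U i, (s p) 0 = (p : X × X).1 ∧ (s p) 1 = (p : X × X).2

/-- The topological complexity `TC(X)`. -/
noncomputable def TopComplexity (X : Type*) [TopologicalSpace X] : ℕ :=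
  sInf {r | HasTCCover X r}

/-- If there is an `n`-valued random motion planning algorithm in `X`
(continuous probabilities `p_j` summing to `1`, with sections `s_j` of the
endpoint map continuous on `U_j = p_j⁻¹((0,1])`), then the `U_j` form an open
cover of `X × X` admitting continuous local sections, and hence `TC(X) ≤ n`. -/
theorem tc_le_of_random_motion_planning_algorithm
    (X : Type*) [TopologicalSpace X] [PathConnectedSpace X]
    (n : ℕ) (p : Fin n → C(X × X, ℝ))
    (hp01 : ∀ j x, p j x ∈ Set.Icc (0 : ℝ) 1)
    (hsum : ∀ x, ∑ j, p j x = 1)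
    (s : ∀ j : Fin n, {x : X × X | 0 < p j x} → C(unitInterval, X))
    (hscont : ∀ j, Continuous (s j))
    (hsend : ∀ (j) (q : {x : X × X | 0 < p j x}),
      (s j q) 0 = (q : X × X).1 ∧ (s j q) 1 = (q : X × X).2) :
    (∀ j, IsOpen {x : X × X | 0 < p j x}) ∧
    (⋃ j, {x : X × X | 0 < p j x}) = Set.univ ∧
    TopComplexity X ≤ n := by
  have hopen : ∀ j, IsOpen {x : X × X | 0 < p j x} := fun j =>
    isOpen_lt continuous_const (p j).continuous
  have hcover : (⋃ j, {x : X × X | 0 < p j x}) = Set.univ := by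
    ext x
    simp only [Set.mem_iUnion, Set.mem_univ, iff_true, Set.mem_setOf_eq]
    by_contra h
    push_neg at h
    have : ∑ j, p j x ≤ 0 := Finset.sum_nonpos fun j _ => h j
    rw [hsum x] at this
    linarith
  refine ⟨hopen, hcover, ?_⟩
  exact Nat.sInf_le ⟨fun j => {x : X × X | 0 < p j x}, hopen, hcover,
    fun j => ⟨s j, hscont j, hsend j⟩⟩
end

section
/- Let Γ be a finite connected graph (1-dimensional CW complex) having at least one essential vertex, i.e., a vertex incident to at least 3 edges. Then for every n ≥ 1 the ordered configuration space F(Γ, n) = {(x₁,…,x_n) ∈ Γⁿ : x_i ≠ x_j for i ≠ j} is path-connected. -/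
open Set

variable {V : Type*}

def graphRealization [DecidableEq V] (G : SimpleGraph V) : Set (V → ℝ) :=
  {x | ∃ u v : V, G.Adj u v ∧ ∃ t ∈ Icc (0 : ℝ) 1,
    x = t • (Pi.single u 1 : V → ℝ) + (1 - t) • (Pi.single v 1 : V → ℝ)}

namespace GraphCfg

noncomputable section

variable [DecidableEq V]

/-- point of the edge `uv` at parameter `t` (`t = 1` at `u`, `t = 0` at `v`). -/
def seg (u v : V) (t : ℝ) : V → ℝ :=
  t • (Pi.single u 1 : V → ℝ) + (1 - t) • (Pi.single v 1 : V → ℝ)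

lemma seg_apply (u v : V) (t : ℝ) (z : V) :
    seg u v t z = (if z = u then t else 0) + (if z = v then 1 - t else 0) := by
  simp [seg, Pi.single_apply, mul_ite]

lemma seg_apply_left {u v : V} (h : u ≠ v) (t : ℝ) : seg u v t u = t := by
  simp [seg_apply, h]

lemma seg_apply_right {u v : V} (h : u ≠ v) (t : ℝ) : seg u v t v = 1 - t := by
  simp [seg_apply, h.symm]

lemma seg_apply_other {u v z : V} (hu : z ≠ u) (hv : z ≠ v) (t : ℝ) :
    seg u v t z = 0 := by simp [seg_apply, hu, hv]

lemma seg_symm (u v : V) (t : ℝ) : seg u v t = seg v u (1 - t) := by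
  unfold seg; ring_nf

lemma seg_one (u v : V) : seg u v 1 = Pi.single u 1 := by
  unfold seg; simp

lemma seg_zero (u v : V) : seg u v 0 = Pi.single v 1 := by
  unfold seg; simp

lemma continuous_seg (u v : V) : Continuous fun t : ℝ => seg u v t := by
  unfold seg; fun_prop

variable {G : SimpleGraph V}

lemma seg_mem (h : G.Adj u v) {t : ℝ} (ht : t ∈ Icc (0:ℝ) 1) :
    seg u v t ∈ graphRealization G :=
  ⟨u, v, h, t, ht, rfl⟩

lemma single_mem (h : G.Adj u v) : (Pi.single u 1 : V → ℝ) ∈ graphRealization G := by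
  rw [← seg_one u v]; exact seg_mem h (by norm_num)

/-- identification of interior points -/
lemma seg_eq_seg {u v u' v' : V} {t t' : ℝ} (huv : u ≠ v) (hu'v' : u' ≠ v')
    (ht : t ∈ Ioo (0:ℝ) 1) (ht' : t' ∈ Ioo (0:ℝ) 1)
    (h : seg u v t = seg u' v' t') :
    (u = u' ∧ v = v' ∧ t = t') ∨ (u = v' ∧ v = u' ∧ t = 1 - t') := by
  have hu := congrFun h u
  rw [seg_apply_left huv] at hu
  by_cases h1 : u = u'
  · left
    refine ⟨h1, ?_, ?_⟩
    · have hv := congrFun h v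
      rw [seg_apply_right huv] at hv
      by_cases h2 : v = v'
      · exact h2
      · rw [seg_apply, if_neg (by rintro rfl; exact huv h1), if_neg h2] at hv
        simp at hv
        exact absurd hv (by linarith [ht.2])
    · rw [seg_apply, if_pos h1, if_neg (by rintro rfl; exact hu'v' h1.symm)] at hu
      linarith
  · by_cases h2 : u = v'
    · right
      refine ⟨h2, ?_, ?_⟩
      · have hv := congrFun h v
        rw [seg_apply_right huv] at hv
        by_cases h3 : v = u'
        · exact h3
        · rw [seg_apply, if_neg h3, if_neg (by rintro rfl; exact huv h2)] at hv
          exact absurd hv (by intro hh; simp at hh; linarith [ht.2])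
      · rw [seg_apply, if_neg h1, if_pos h2] at hu; linarith
    · rw [seg_apply, if_neg h1, if_neg h2] at hu
      simp at hu; linarith [ht.1]

/-- an interior point is not a vertex -/
lemma seg_ne_single {u v z : V} {t : ℝ} (huv : u ≠ v) (ht : t ∈ Ioo (0:ℝ) 1) :
    seg u v t ≠ Pi.single z 1 := by
  intro h
  have hu := congrFun h u
  rw [seg_apply_left huv, Pi.single_apply] at hu
  by_cases h1 : u = z <;> simp [h1] at hu
  · linarith [ht.2]
  · linarith [ht.1]

lemma single_injective {z z' : V} (h : (Pi.single z 1 : V → ℝ) = Pi.single z' 1) :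
    z = z' := by
  have := congrFun h z
  rw [Pi.single_apply, Pi.single_apply, if_pos rfl] at this
  by_cases h1 : z = z'
  · exact h1
  · simp [h1] at this

/-- coordinates of points of the realization lie in `[0,1]`; value 1 only at a vertex. -/
lemma coord_le {p : V → ℝ} (hp : p ∈ graphRealization G) (z : V) :
    p z ≤ 1 ∧ (p z = 1 → p = Pi.single z 1) := by
  obtain ⟨u, v, hadj, t, ht, rfl⟩ := hp
  have huv : u ≠ v := hadj.ne
  rw [show (t • (Pi.single u 1 : V → ℝ) + (1 - t) • (Pi.single v 1 : V → ℝ)) = seg u v t from rfl]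
  rw [seg_apply]
  by_cases h1 : z = u <;> by_cases h2 : z = v
  · exact absurd (h1 ▸ h2 ▸ rfl : u = v) (by exact huv)
  · rw [if_pos h1, if_neg h2]
    refine ⟨by linarith [ht.2], fun h => ?_⟩
    have : t = 1 := by linarith
    subst this h1; rw [seg_one]
  · rw [if_neg h1, if_pos h2]
    refine ⟨by linarith [ht.1], fun h => ?_⟩
    have : t = 0 := by linarith
    subst this h2; rw [seg_zero]
  · rw [if_neg h1, if_neg h2]
    exact ⟨by norm_num, fun h => absurd h (by norm_num)⟩


/-! ### configuration space and the basic move -/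

variable (G) in
def cspace (n : ℕ) : Set (Fin n → V → ℝ) :=
  {x | (∀ i, x i ∈ graphRealization G) ∧ Function.Injective x}

lemma update_injective {n : ℕ} {x : Fin n → V → ℝ} (hx : Function.Injective x)
    (i : Fin n) {q : V → ℝ} (hq : ∀ j, j ≠ i → x j ≠ q) :
    Function.Injective (Function.update x i q) := by
  intro j k h
  by_cases hj : j = i
  · subst hj
    by_cases hk : k = j
    · exact hk.symm
    · rw [Function.update_self, Function.update_of_ne hk] at h
      exact absurd h.symm (hq k hk)
  · by_cases hk : k = i
    · subst hk
      rw [Function.update_of_ne hj, Function.update_self] at h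
      exact absurd h (hq j hj)
    · rw [Function.update_of_ne hj, Function.update_of_ne hk] at h
      exact hx h

lemma affine_mem_uIcc {s₀ s₁ θ : ℝ} (h0 : 0 ≤ θ) (h1 : θ ≤ 1) :
    s₀ + θ * (s₁ - s₀) ∈ uIcc s₀ s₁ := by
  rcases le_total s₀ s₁ with h | h
  · rw [uIcc_of_le h]; constructor <;> nlinarith
  · rw [uIcc_of_ge h]; constructor <;> nlinarith

lemma uIcc_subset_unit {s₀ s₁ : ℝ} (h0 : s₀ ∈ Icc (0:ℝ) 1) (h1 : s₁ ∈ Icc (0:ℝ) 1) :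
    uIcc s₀ s₁ ⊆ Icc (0:ℝ) 1 := by
  rw [uIcc]; exact Icc_subset_Icc (le_inf h0.1 h1.1) (sup_le h0.2 h1.2)

/-- The basic move: slide the `i`-th point along the edge `uv` from parameter `s₀`
to parameter `s₁`, provided no other point of the configuration lies on the
travelled subsegment. -/
lemma slideMove {n : ℕ} {x : Fin n → V → ℝ} (hx : x ∈ cspace G n) (i : Fin n)
    {u v : V} (hadj : G.Adj u v) {s₀ s₁ : ℝ}
    (hs₀ : s₀ ∈ Icc (0:ℝ) 1) (hs₁ : s₁ ∈ Icc (0:ℝ) 1)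
    (hxi : x i = seg u v s₀)
    (hav : ∀ r ∈ uIcc s₀ s₁, ∀ j, j ≠ i → x j ≠ seg u v r) :
    JoinedIn (cspace G n) x (Function.update x i (seg u v s₁)) := by
  classical
  have hcont : Continuous fun θ : unitInterval =>
      Function.update x i (seg u v (s₀ + (θ : ℝ) * (s₁ - s₀))) := by
    refine Continuous.update continuous_const i ?_
    exact (continuous_seg u v).comp (by fun_prop)
  refine ⟨⟨⟨fun θ => Function.update x i (seg u v (s₀ + (θ : ℝ) * (s₁ - s₀))), hcont⟩,
    ?_, ?_⟩, ?_⟩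
  · simp only [Icc.coe_zero, zero_mul, add_zero, ← hxi, Function.update_eq_self]
  · norm_num
  · intro θ
    have hθ : s₀ + (θ : ℝ) * (s₁ - s₀) ∈ uIcc s₀ s₁ := affine_mem_uIcc θ.2.1 θ.2.2
    simp only [Path.coe_mk_mk]
    constructor
    · intro j
      rcases eq_or_ne j i with rfl | hj
      · rw [Function.update_self]
        exact seg_mem hadj (uIcc_subset_unit hs₀ hs₁ hθ)
      · rw [Function.update_of_ne hj]; exact hx.1 j
    · exact update_injective hx.2 i (fun j hj => hav _ hθ j hj)

lemma slideMove' {n : ℕ} {x : Fin n → V → ℝ} (hx : x ∈ cspace G n) (i : Fin n)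
    {u v : V} (hadj : G.Adj u v) {s₀ s₁ : ℝ}
    (hs₀ : s₀ ∈ Icc (0:ℝ) 1) (hs₁ : s₁ ∈ Icc (0:ℝ) 1)
    (hxi : x i = seg u v s₀)
    (hav : ∀ r ∈ uIcc s₀ s₁, ∀ j, j ≠ i → x j ≠ seg u v r) :
    Function.update x i (seg u v s₁) ∈ cspace G n :=
  (slideMove hx i hadj hs₀ hs₁ hxi hav).target_mem


/-! ### the star of an essential vertex -/

variable (G : SimpleGraph V) in
/-- An essential vertex `w` together with three distinct neighbours. -/
structure Star where
  w : V
  a : V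
  b : V
  c : V
  hwa : G.Adj w a
  hwb : G.Adj w b
  hwc : G.Adj w c
  hab : a ≠ b
  hac : a ≠ c
  hbc : b ≠ c

namespace Star

variable {G : SimpleGraph V} (S : Star G) {n : ℕ}

def IsBr (ν : V) : Prop := ν = S.a ∨ ν = S.b ∨ ν = S.c

lemma adj_br {ν : V} (h : S.IsBr ν) : G.Adj S.w ν := by
  rcases h with rfl | rfl | rfl
  exacts [S.hwa, S.hwb, S.hwc]

lemma w_ne_br {ν : V} (h : S.IsBr ν) : S.w ≠ ν := (S.adj_br h).ne

/-- a point lying in the open interior of one of the non-star edges. -/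
def Out (p : V → ℝ) : Prop :=
  ∃ u v : V, G.Adj u v ∧ ¬(u = S.w ∧ S.IsBr v) ∧ ¬(v = S.w ∧ S.IsBr u) ∧
    ∃ t ∈ Ioo (0:ℝ) 1, p = seg u v t

/-- the tokens of `U` are parked on the open branches of the star as recorded
by `br`, `pos`. -/
def Parked (x : Fin n → V → ℝ) (U : Finset (Fin n)) (br : Fin n → V)
    (pos : Fin n → ℝ) : Prop :=
  ∀ i ∈ U, S.IsBr (br i) ∧ pos i ∈ Ioo (0:ℝ) 1 ∧ x i = seg S.w (br i) (pos i)

lemma branch_eq_branch {ν ν' : V} (hν : S.IsBr ν) (hν' : S.IsBr ν')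
    {s r : ℝ} (hs : s ∈ Ioo (0:ℝ) 1) (hr : r ∈ Ioo (0:ℝ) 1)
    (h : seg S.w ν s = seg S.w ν' r) : ν = ν' ∧ s = r := by
  rcases seg_eq_seg (S.w_ne_br hν) (S.w_ne_br hν') hs hr h with ⟨-, h2, h3⟩ | ⟨h1, -, -⟩
  · exact ⟨h2, h3⟩
  · exact absurd h1 (S.w_ne_br hν')

/-- a point on a closed branch of the star is distinct from any interior point
of a non-star edge. -/
lemma branch_ne_nonY {ν : V} (hν : S.IsBr ν) {s : ℝ} (hs : s ∈ Icc (0:ℝ) 1)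
    {u v : V} (hadj : G.Adj u v) (h1 : ¬(u = S.w ∧ S.IsBr v))
    (h2 : ¬(v = S.w ∧ S.IsBr u)) {t : ℝ} (ht : t ∈ Ioo (0:ℝ) 1) :
    seg S.w ν s ≠ seg u v t := by
  intro h
  rcases eq_or_lt_of_le hs.1 with h0 | h0
  · rw [← h0, seg_zero] at h; exact seg_ne_single hadj.ne ht h.symm
  rcases eq_or_lt_of_le hs.2 with h1' | h1'
  · rw [h1', seg_one] at h; exact seg_ne_single hadj.ne ht h.symm
  rcases seg_eq_seg (S.w_ne_br hν) hadj.ne ⟨h0, h1'⟩ ht h with ⟨e1, e2, -⟩ | ⟨e1, e2, -⟩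
  · exact h1 ⟨e1.symm, e2 ▸ hν⟩
  · exact h2 ⟨e1.symm, e2 ▸ hν⟩

lemma out_ne_branch {p : V → ℝ} (ho : S.Out p) {ν : V} (hν : S.IsBr ν)
    {r : ℝ} (hr : r ∈ Icc (0:ℝ) 1) : p ≠ seg S.w ν r := by
  obtain ⟨u, v, hadj, h1, h2, t, ht, rfl⟩ := ho
  exact fun h => S.branch_ne_nonY hν hr hadj h1 h2 ht h.symm

lemma out_ne_single {p : V → ℝ} (ho : S.Out p) (z : V) : p ≠ Pi.single z 1 := by
  obtain ⟨u, v, hadj, -, -, t, ht, rfl⟩ := ho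
  exact seg_ne_single hadj.ne ht

/-- master avoidance lemma for slides along a closed branch of the star. -/
lemma avoid_branch {x : Fin n → V → ℝ} {U : Finset (Fin n)} {br : Fin n → V}
    {pos : Fin n → ℝ} {i : Fin n}
    (hPj : ∀ j ∈ U, j ≠ i → S.IsBr (br j) ∧ pos j ∈ Ioo (0:ℝ) 1 ∧
      x j = seg S.w (br j) (pos j))
    (hout : ∀ j ∉ U, j ≠ i → S.Out (x j))
    {ν : V} (hν : S.IsBr ν) {r : ℝ} (hr : r ∈ Icc (0:ℝ) 1)
    (hA : ∀ j ∈ U, j ≠ i → br j = ν → pos j ≠ r) :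
    ∀ j, j ≠ i → x j ≠ seg S.w ν r := by
  intro j hj h
  by_cases hU : j ∈ U
  · obtain ⟨hb, hp, hxj⟩ := hPj j hU hj
    rw [hxj] at h
    rcases eq_or_lt_of_le hr.1 with h0 | h0
    · rw [← h0, seg_zero] at h; exact seg_ne_single (S.w_ne_br hb) hp h
    rcases eq_or_lt_of_le hr.2 with h1 | h1
    · rw [h1, seg_one] at h; exact seg_ne_single (S.w_ne_br hb) hp h
    obtain ⟨e1, e2⟩ := S.branch_eq_branch hb hν hp ⟨h0, h1⟩ h
    exact hA j hU hj e1 e2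
  · exact S.out_ne_branch (hout j hU hj) hν hr h

/-- there is room above all tokens parked on branch `ν`. -/
lemma exists_above {U : Finset (Fin n)} {br : Fin n → V} {pos : Fin n → ℝ}
    (hP : ∀ j ∈ U, pos j ∈ Ioo (0:ℝ) 1) (ν : V) :
    ∃ p ∈ Ioo (0:ℝ) 1, ∀ j ∈ U, br j = ν → pos j < p := by
  classical
  set T : Finset ℝ := insert (0:ℝ) ((U.filter fun j => br j = ν).image pos) with hT
  have hne : T.Nonempty := ⟨0, Finset.mem_insert_self _ _⟩
  set M := T.max' hne with hM
  have hM1 : M < 1 := by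
    rw [hM, Finset.max'_lt_iff]
    intro y hy
    rcases Finset.mem_insert.1 hy with rfl | hy
    · norm_num
    · obtain ⟨j, hj, rfl⟩ := Finset.mem_image.1 hy
      exact (hP j (Finset.mem_filter.1 hj).1).2
  have hM0 : (0:ℝ) ≤ M := Finset.le_max' _ _ (Finset.mem_insert_self _ _)
  refine ⟨(M + 1) / 2, ⟨by linarith, by linarith⟩, fun j hj hbj => ?_⟩
  have : pos j ≤ M := Finset.le_max' _ _
    (Finset.mem_insert_of_mem (Finset.mem_image_of_mem pos (Finset.mem_filter.2 ⟨hj, hbj⟩)))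
  linarith

/-- there is room below all tokens parked on branch `ν`. -/
lemma exists_below {U : Finset (Fin n)} {br : Fin n → V} {pos : Fin n → ℝ}
    (hP : ∀ j ∈ U, pos j ∈ Ioo (0:ℝ) 1) (ν : V) :
    ∃ p ∈ Ioo (0:ℝ) 1, ∀ j ∈ U, br j = ν → p < pos j := by
  classical
  set T : Finset ℝ := insert (1:ℝ) ((U.filter fun j => br j = ν).image pos) with hT
  have hne : T.Nonempty := ⟨1, Finset.mem_insert_self _ _⟩
  set M := T.min' hne with hM
  have hM1 : 0 < M := by
    rw [hM, Finset.lt_min'_iff]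
    intro y hy
    rcases Finset.mem_insert.1 hy with rfl | hy
    · norm_num
    · obtain ⟨j, hj, rfl⟩ := Finset.mem_image.1 hy
      exact (hP j (Finset.mem_filter.1 hj).1).1
  have hM0 : M ≤ 1 := Finset.min'_le _ _ (Finset.mem_insert_self _ _)
  refine ⟨M / 2, ⟨by linarith, by linarith⟩, fun j hj hbj => ?_⟩
  have : M ≤ pos j := Finset.min'_le _ _
    (Finset.mem_insert_of_mem (Finset.mem_image_of_mem pos (Finset.mem_filter.2 ⟨hj, hbj⟩)))
  linarith

/-- the topmost token on a nonempty branch `ν`. -/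
lemma exists_top {x : Fin n → V → ℝ} {U : Finset (Fin n)} {br : Fin n → V}
    {pos : Fin n → ℝ} (hinj : Function.Injective x)
    (hP : S.Parked x U br pos) {ν : V}
    (hne : (U.filter fun j => br j = ν).Nonempty) :
    ∃ i ∈ U, br i = ν ∧ ∀ j ∈ U, j ≠ i → br j = br i → pos j < pos i := by
  classical
  obtain ⟨i, hi, hmax⟩ := Finset.exists_max_image _ pos hne
  obtain ⟨hiU, hbi⟩ := Finset.mem_filter.1 hi
  refine ⟨i, hiU, hbi, fun j hj hji hbj => ?_⟩
  have hle : pos j ≤ pos i := hmax j (Finset.mem_filter.2 ⟨hj, hbj.trans hbi⟩)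
  rcases eq_or_lt_of_le hle with he | h
  · exfalso
    apply hji
    apply hinj
    rw [(hP j hj).2.2, (hP i hiU).2.2, hbj, he]
  · exact h


/-- Move the token `i`, topmost on its branch, to position `p` on another branch `ν'`,
below which all tokens of `ν'` lie. -/
lemma ymove {x : Fin n → V → ℝ} {U : Finset (Fin n)} {br : Fin n → V}
    {pos : Fin n → ℝ} {i : Fin n} (hx : x ∈ cspace G n) (hP : S.Parked x U br pos)
    (hout : ∀ j ∉ U, j ≠ i → S.Out (x j)) (hi : i ∈ U)
    {ν' : V} (hν' : S.IsBr ν') (hne : ν' ≠ br i) {p : ℝ} (hp : p ∈ Ioo (0:ℝ) 1)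
    (htop : ∀ j ∈ U, j ≠ i → br j = br i → pos j < pos i)
    (htar : ∀ j ∈ U, j ≠ i → br j = ν' → pos j < p) :
    JoinedIn (cspace G n) x (Function.update x i (seg S.w ν' p)) ∧
      S.Parked (Function.update x i (seg S.w ν' p)) U
        (Function.update br i ν') (Function.update pos i p) := by
  classical
  obtain ⟨hbi, hpi, hxi⟩ := hP i hi
  have hPj : ∀ j ∈ U, j ≠ i → S.IsBr (br j) ∧ pos j ∈ Ioo (0:ℝ) 1 ∧
      x j = seg S.w (br j) (pos j) := fun j hj _ => hP j hj
  -- step 1 : slide token i up to the vertex w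
  have step1 : JoinedIn (cspace G n) x (Function.update x i (seg S.w (br i) 1)) := by
    refine slideMove hx i (S.adj_br hbi) ⟨hpi.1.le, hpi.2.le⟩ (by norm_num) hxi ?_
    intro r hr j hj
    rw [uIcc_of_le hpi.2.le] at hr
    refine S.avoid_branch hPj hout hbi ⟨hpi.1.le.trans hr.1, hr.2⟩ ?_ j hj
    intro j' hj' hji hbj
    exact ne_of_lt (lt_of_lt_of_le (htop j' hj' hji hbj) hr.1)
  set x₁ := Function.update x i (seg S.w (br i) 1) with hx₁def
  have hx₁ : x₁ ∈ cspace G n := step1.target_mem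
  have hx₁j : ∀ j, j ≠ i → x₁ j = x j := fun j hj => Function.update_of_ne hj _ _
  have hx₁i : x₁ i = seg S.w ν' 1 := by
    rw [hx₁def, Function.update_self, seg_one, seg_one]
  -- step 2 : slide token i down the branch ν' to position p
  have step2 : JoinedIn (cspace G n) x₁ (Function.update x₁ i (seg S.w ν' p)) := by
    refine slideMove hx₁ i (S.adj_br hν') (by norm_num) ⟨hp.1.le, hp.2.le⟩ hx₁i ?_
    intro r hr j hj
    rw [uIcc_comm, uIcc_of_le hp.2.le] at hr
    rw [hx₁j j hj]
    refine S.avoid_branch hPj hout hν' ⟨hp.1.le.trans hr.1, hr.2⟩ ?_ j hj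
    intro j' hj' hji hbj
    exact ne_of_lt (lt_of_lt_of_le (htar j' hj' hji hbj) hr.1)
  have hupd : Function.update x₁ i (seg S.w ν' p) = Function.update x i (seg S.w ν' p) := by
    rw [hx₁def, Function.update_idem]
  refine ⟨step1.trans (hupd ▸ step2), ?_⟩
  intro j hj
  by_cases hji : j = i
  · subst hji
    rw [Function.update_self, Function.update_self, Function.update_self]
    exact ⟨hν', hp, rfl⟩
  · rw [Function.update_of_ne hji, Function.update_of_ne hji, Function.update_of_ne hji]
    exact hP j hj

/-- Clear the part of branch `ν` strictly above level `L`, moving those tokens to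
branch `ν'`.  (All tokens parked; used in the final normalization phase.) -/
lemma clearAbove {ν ν' : V} (hν : S.IsBr ν) (hν' : S.IsBr ν') (hne : ν' ≠ ν) (L : ℝ) :
    ∀ (m : ℕ) (x : Fin n → V → ℝ) (br : Fin n → V) (pos : Fin n → ℝ),
    x ∈ cspace G n → S.Parked x Finset.univ br pos →
    (Finset.univ.filter fun j => br j = ν ∧ L < pos j).card ≤ m →
    ∃ x' br' pos', x' ∈ cspace G n ∧ S.Parked x' Finset.univ br' pos' ∧
      JoinedIn (cspace G n) x x' ∧
      (∀ j, ¬(br j = ν ∧ L < pos j) → x' j = x j ∧ br' j = br j ∧ pos' j = pos j) ∧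
      (∀ j, br' j = br j ∨ (br j = ν ∧ br' j = ν')) ∧
      (∀ j, br' j = ν → pos' j ≤ L) := by
  classical
  intro m
  induction m with
  | zero =>
    intro x br pos hx hP hcard
    refine ⟨x, br, pos, hx, hP, JoinedIn.refl hx, fun j _ => ⟨rfl, rfl, rfl⟩,
      fun j => Or.inl rfl, fun j hbj => ?_⟩
    by_contra hL
    have : j ∈ Finset.univ.filter fun j => br j = ν ∧ L < pos j :=
      Finset.mem_filter.2 ⟨Finset.mem_univ j, hbj, lt_of_not_ge hL⟩
    have := Finset.card_pos.2 ⟨j, this⟩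
    omega
  | succ m ih =>
    intro x br pos hx hP hcard
    rcases Finset.eq_empty_or_nonempty
      (Finset.univ.filter fun j => br j = ν ∧ L < pos j) with hE | hE
    · refine ⟨x, br, pos, hx, hP, JoinedIn.refl hx, fun j _ => ⟨rfl, rfl, rfl⟩,
        fun j => Or.inl rfl, fun j hbj => ?_⟩
      by_contra hL
      have : j ∈ Finset.univ.filter fun j => br j = ν ∧ L < pos j :=
        Finset.mem_filter.2 ⟨Finset.mem_univ j, hbj, lt_of_not_ge hL⟩
      rw [hE] at this
      exact absurd this (Finset.notMem_empty j)
    · -- take the topmost token on branch ν, move it to ν'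
      obtain ⟨j₀, hj₀⟩ := hE
      obtain ⟨hj₀u, hbj₀, hLj₀⟩ := Finset.mem_filter.1 hj₀
      have hbne : (Finset.univ.filter fun j => br j = ν).Nonempty :=
        ⟨j₀, Finset.mem_filter.2 ⟨hj₀u, hbj₀⟩⟩
      obtain ⟨i, hiu, hbi, htop⟩ := S.exists_top hx.2 hP hbne
      have hout : ∀ j ∉ (Finset.univ : Finset (Fin n)), j ≠ i → S.Out (x j) :=
        fun j hj _ => absurd (Finset.mem_univ j) hj
      obtain ⟨p, hp, hpab⟩ := exists_above (fun j hj => (hP j hj).2.1) ν'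
      have hνbi : ν' ≠ br i := hbi ▸ hne
      obtain ⟨hmove, hP₁⟩ := S.ymove hx hP hout hiu hν' hνbi hp htop
        (fun j hj _ hbj => hpab j hj hbj)
      set x₁ := Function.update x i (seg S.w ν' p)
      set br₁ := Function.update br i ν'
      set pos₁ := Function.update pos i p
      have hx₁ : x₁ ∈ cspace G n := hmove.target_mem
      -- token i is above level L
      have hiL : L < pos i := by
        rcases eq_or_ne j₀ i with rfl | hj₀i
        · exact hLj₀
        · exact hLj₀.trans (htop j₀ hj₀u hj₀i (hbj₀.trans hbi.symm))
      -- the filter shrinks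
      have hsub : (Finset.univ.filter fun j => br₁ j = ν ∧ L < pos₁ j) ⊆
          (Finset.univ.filter fun j => br j = ν ∧ L < pos j).erase i := by
        intro j hj
        obtain ⟨-, hb, hL'⟩ := Finset.mem_filter.1 hj
        have hji : j ≠ i := by
          rintro rfl
          simp only [br₁, Function.update_self] at hb
          exact hne hb
        simp only [br₁, Function.update_of_ne hji] at hb
        simp only [pos₁, Function.update_of_ne hji] at hL'
        exact Finset.mem_erase.2 ⟨hji, Finset.mem_filter.2 ⟨Finset.mem_univ j, hb, hL'⟩⟩
      have hcard₁ : (Finset.univ.filter fun j => br₁ j = ν ∧ L < pos₁ j).card ≤ m := by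
        have h1 := Finset.card_le_card hsub
        have h2 : ((Finset.univ.filter fun j => br j = ν ∧ L < pos j).erase i).card =
            (Finset.univ.filter fun j => br j = ν ∧ L < pos j).card - 1 :=
          Finset.card_erase_of_mem (Finset.mem_filter.2 ⟨hiu, hbi, hiL⟩)
        omega
      obtain ⟨x', br', pos', hx', hP', hJ, hpres, hbrtrack, hlow⟩ :=
        ih x₁ br₁ pos₁ hx₁ hP₁ hcard₁
      refine ⟨x', br', pos', hx', hP', hmove.trans hJ, ?_, ?_, hlow⟩
      · intro j hj
        have hji : j ≠ i := by rintro rfl; exact hj ⟨hbi, hiL⟩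
        have hb₁ : br₁ j = br j := Function.update_of_ne hji _ _
        have hp₁ : pos₁ j = pos j := Function.update_of_ne hji _ _
        have hx₁j : x₁ j = x j := Function.update_of_ne hji _ _
        have := hpres j (by rw [hb₁, hp₁]; exact hj)
        exact ⟨by rw [this.1, hx₁j], by rw [this.2.1, hb₁], by rw [this.2.2, hp₁]⟩
      · intro j
        rcases eq_or_ne j i with rfl | hji
        · rcases hbrtrack j with h | h
          · right
            refine ⟨hbi, ?_⟩
            rw [h]
            simp only [br₁, Function.update_self]
          · right
            exact ⟨hbi, h.2⟩
        · have hb₁ : br₁ j = br j := Function.update_of_ne hji _ _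
          rcases hbrtrack j with h | h
          · left; rw [h, hb₁]
          · right; exact ⟨hb₁ ▸ h.1, h.2⟩


lemma pos_inj {x : Fin n → V → ℝ} {U : Finset (Fin n)} {br : Fin n → V}
    {pos : Fin n → ℝ} (hinj : Function.Injective x) (hP : S.Parked x U br pos)
    {j k : Fin n} (hj : j ∈ U) (hk : k ∈ U) (hb : br j = br k) (hp : pos j = pos k) :
    j = k :=
  hinj (by rw [(hP j hj).2.2, (hP k hk).2.2, hb, hp])

/-- the canonical configuration: all tokens on branch `a`, in index order. -/
def canon (S : Star G) (n : ℕ) : Fin n → V → ℝ :=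
  fun i => seg S.w S.a (((i : ℕ) + 1 : ℝ) / (n + 1))

lemma qmem {n : ℕ} (i : Fin n) : (((i:ℕ) + 1 : ℝ)) / (n + 1) ∈ Ioo (0:ℝ) 1 := by
  constructor
  · positivity
  · rw [div_lt_one (by positivity)]
    exact_mod_cast Nat.add_lt_add_right i.2 1

lemma qlt {n : ℕ} {i j : Fin n} (h : (i:ℕ) < (j:ℕ)) :
    (((i:ℕ) + 1 : ℝ)) / (n + 1) < (((j:ℕ) + 1 : ℝ)) / (n + 1) := by
  have h1 : ((i:ℕ) + 1 : ℝ) < ((j:ℕ) + 1 : ℝ) := by exact_mod_cast Nat.add_lt_add_right h 1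
  have h2 : (0:ℝ) < n + 1 := by positivity
  exact div_lt_div_of_pos_right h1 h2

lemma canon_mem : canon S n ∈ cspace G n := by
  constructor
  · intro i
    exact seg_mem S.hwa ⟨(qmem i).1.le, (qmem i).2.le⟩
  · intro i j h
    have := S.branch_eq_branch (Or.inl rfl) (Or.inl rfl) (qmem i) (qmem j) h
    have h2 := this.2
    field_simp at h2
    exact Fin.ext (by exact_mod_cast (add_right_cancel h2))

lemma build : ∀ (m k : ℕ) (x : Fin n → V → ℝ) (br : Fin n → V) (pos : Fin n → ℝ),
    x ∈ cspace G n → S.Parked x Finset.univ br pos → n ≤ m + k →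
    (∀ i : Fin n, (i:ℕ) < k → br i = S.a ∧ pos i = ((i:ℕ) + 1 : ℝ) / (n + 1)) →
    (∀ i : Fin n, k ≤ (i:ℕ) → br i ≠ S.a) →
    JoinedIn (cspace G n) x (canon S n) := by
  classical
  have done : ∀ (k : ℕ) (x : Fin n → V → ℝ) (br : Fin n → V) (pos : Fin n → ℝ),
      x ∈ cspace G n → S.Parked x Finset.univ br pos → n ≤ k →
      (∀ i : Fin n, (i:ℕ) < k → br i = S.a ∧ pos i = ((i:ℕ) + 1 : ℝ) / (n + 1)) →
      JoinedIn (cspace G n) x (canon S n) := by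
    intro k x br pos hx hP hnk h1
    have hxc : x = canon S n := funext fun i => by
      obtain ⟨hb, hp, hxi⟩ := hP i (Finset.mem_univ i)
      obtain ⟨hba, hpa⟩ := h1 i (lt_of_lt_of_le i.2 hnk)
      rw [hxi, hba, hpa]; rfl
    rw [hxc]; exact JoinedIn.refl (hxc ▸ hx)
  intro m
  induction m with
  | zero =>
    intro k x br pos hx hP hnk h1 h2
    exact done k x br pos hx hP (by omega) h1
  | succ m ih =>
    intro k x br pos hx hP hnk h1 h2
    by_cases hk : n ≤ k
    · exact done k x br pos hx hP hk h1
    push_neg at hk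
    set k' : Fin n := ⟨k, hk⟩ with hk'
    have hk'v : (k' : ℕ) = k := rfl
    have hbrk : br k' ≠ S.a := h2 k' (le_of_eq hk'v.symm)
    have hbk' : S.IsBr (br k') := (hP k' (Finset.mem_univ _)).1
    set γ := if br k' = S.b then S.c else S.b with hγdef
    have hγ : S.IsBr γ := by
      rw [hγdef]; split
      · exact Or.inr (Or.inr rfl)
      · exact Or.inr (Or.inl rfl)
    have hγne : γ ≠ br k' := by
      rw [hγdef]; split
      · rename_i h; rw [h]; exact S.hbc.symm
      · rename_i h; exact fun hh => h hh.symm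
    have hγa : γ ≠ S.a := by
      rw [hγdef]; split
      · exact S.hac.symm
      · exact S.hab.symm
    obtain ⟨x₁, br₁, pos₁, hx₁, hP₁, hJ₁, hpres, htrack, hlow⟩ :=
      S.clearAbove hbk' hγ hγne (pos k') _ x br pos hx hP (le_refl _)
    obtain ⟨hxk', hbk'1, hpk'1⟩ := hpres k' (by simp [lt_irrefl])
    have hout : ∀ j ∉ (Finset.univ : Finset (Fin n)), j ≠ k' → S.Out (x₁ j) :=
      fun j hj _ => absurd (Finset.mem_univ j) hj
    have htop₁ : ∀ j ∈ (Finset.univ : Finset (Fin n)), j ≠ k' →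
        br₁ j = br₁ k' → pos₁ j < pos₁ k' := by
      intro j _ hj hb
      have hle : pos₁ j ≤ pos k' := hlow j (by rw [hb, hbk'1])
      rw [hpk'1]
      rcases eq_or_lt_of_le hle with he | h
      · exact absurd (S.pos_inj hx₁.2 hP₁ (Finset.mem_univ j) (Finset.mem_univ k') hb
          (by rw [he, hpk'1])) hj
      · exact h
    have htar₁ : ∀ j ∈ (Finset.univ : Finset (Fin n)), j ≠ k' →
        br₁ j = S.a → pos₁ j < ((k' : ℕ) + 1 : ℝ) / (n + 1) := by
      intro j _ hj hb
      rcases htrack j with h | h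
      · have hbj : br j = S.a := by rw [← h, hb]
        have hjk : (j : ℕ) < k := by
          by_contra hc
          exact h2 j (le_of_not_gt hc) hbj
        obtain ⟨-, hpj⟩ := h1 j hjk
        obtain ⟨-, -, hppres⟩ := hpres j (fun hh => hbrk (by rw [← hh.1, hbj]))
        rw [hppres, hpj]
        exact qlt (by rw [hk'v]; exact hjk)
      · exact absurd (h.2.symm.trans hb) hγa
    have hyA : S.IsBr S.a := Or.inl rfl
    have hneA : S.a ≠ br₁ k' := by rw [hbk'1]; exact (Ne.symm hbrk)
    obtain ⟨hmove, hP₂⟩ := S.ymove hx₁ hP₁ hout (Finset.mem_univ k') hyA hneA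
      (qmem k') htop₁ htar₁
    set x₂ := Function.update x₁ k' (seg S.w S.a (((k' : ℕ) + 1 : ℝ) / (n + 1)))
    set br₂ := Function.update br₁ k' S.a
    set pos₂ := Function.update pos₁ k' (((k' : ℕ) + 1 : ℝ) / (n + 1))
    have hx₂ : x₂ ∈ cspace G n := hmove.target_mem
    refine hJ₁.trans (hmove.trans (ih (k + 1) x₂ br₂ pos₂ hx₂ hP₂ (by omega) ?_ ?_))
    · intro i hik
      by_cases hieq : i = k'
      · subst hieq
        constructor
        · simp [br₂, Function.update_self]
        · simp [pos₂, Function.update_self]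
      · have hilt : (i : ℕ) < k := by
          have : (i : ℕ) ≠ k := fun hh => hieq (Fin.ext hh)
          omega
        obtain ⟨hba, hpa⟩ := h1 i hilt
        obtain ⟨-, hb1, hp1⟩ := hpres i (fun hh => hbrk (by rw [← hh.1, hba]))
        constructor
        · simp only [br₂, Function.update_of_ne hieq]; rw [hb1, hba]
        · simp only [pos₂, Function.update_of_ne hieq]; rw [hp1, hpa]
    · intro i hik
      have hieq : i ≠ k' := by
        intro hh; rw [hh] at hik; omega
      simp only [br₂, Function.update_of_ne hieq]
      rcases htrack i with h | h
      · rw [h]; exact h2 i (by omega)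
      · rw [h.2]; exact hγa

/-- every fully parked configuration is joined to the canonical one. -/
lemma toCanon {x : Fin n → V → ℝ} {br : Fin n → V} {pos : Fin n → ℝ}
    (hx : x ∈ cspace G n) (hP : S.Parked x Finset.univ br pos) :
    JoinedIn (cspace G n) x (canon S n) := by
  obtain ⟨x₁, br₁, pos₁, hx₁, hP₁, hJ, -, -, hlow⟩ :=
    S.clearAbove (Or.inl rfl) (Or.inr (Or.inl rfl)) S.hab.symm 0 _ x br pos hx hP (le_refl _)
  refine hJ.trans (S.build n 0 x₁ br₁ pos₁ hx₁ hP₁ (by omega)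
    (fun i hi => absurd hi (by omega)) ?_)
  intro i _ hbi
  exact absurd ((hP₁ i (Finset.mem_univ i)).2.1.1) (not_lt.2 (hlow i hbi))



/-- a point on an open branch of the star differs from every point of a closed
non-star edge. -/
lemma branch_ne_nonY' {ν : V} (hν : S.IsBr ν) {s : ℝ} (hs : s ∈ Ioo (0:ℝ) 1)
    {u v : V} (hadj : G.Adj u v) (h1 : ¬(u = S.w ∧ S.IsBr v))
    (h2 : ¬(v = S.w ∧ S.IsBr u)) {r : ℝ} (hr : r ∈ Icc (0:ℝ) 1) :
    seg S.w ν s ≠ seg u v r := by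
  intro h
  rcases eq_or_lt_of_le hr.1 with h0 | h0
  · rw [← h0, seg_zero] at h; exact seg_ne_single (S.w_ne_br hν) hs h
  rcases eq_or_lt_of_le hr.2 with h1' | h1'
  · rw [h1', seg_one] at h; exact seg_ne_single (S.w_ne_br hν) hs h
  rcases seg_eq_seg (S.w_ne_br hν) hadj.ne hs ⟨h0, h1'⟩ h with ⟨e1, e2, -⟩ | ⟨e1, e2, -⟩
  · exact h1 ⟨e1.symm, e2 ▸ hν⟩
  · exact h2 ⟨e1.symm, e2 ▸ hν⟩

/-- one step towards `w'` along a geodesic. -/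
lemma exists_step (hconn : G.Connected) {z w' : V} (h : z ≠ w') :
    ∃ z', G.Adj z z' ∧ G.dist z' w' + 1 = G.dist z w' := by
  obtain ⟨W, hW⟩ := hconn.exists_walk_length_eq_dist z w'
  cases W with
  | nil => exact absurd rfl h
  | cons hzz' W' =>
    rename_i z'
    refine ⟨z', hzz', le_antisymm ?_ ?_⟩
    · have h1 : G.dist z' w' ≤ W'.length := SimpleGraph.dist_le W'
      have h2 : W'.length + 1 = G.dist z w' := by
        rw [← hW]; simp [SimpleGraph.Walk.length_cons]
      omega
    · have h1 : G.dist z w' ≤ G.dist z z' + G.dist z' w' := hconn.dist_triangle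
      have h2 : G.dist z z' ≤ 1 := by
        have := SimpleGraph.dist_le (SimpleGraph.Walk.cons hzz' SimpleGraph.Walk.nil)
        simpa using this
      omega

/-- Route the free token `i₀`, sitting at the vertex `z`, into the star,
while all other tokens stay put. -/
lemma routeTo (hconn : G.Connected) :
    ∀ (L : ℕ) (z : V) (x : Fin n → V → ℝ) (U : Finset (Fin n)) (br : Fin n → V)
      (pos : Fin n → ℝ) (i₀ : Fin n),
    x ∈ cspace G n → S.Parked x U br pos → i₀ ∉ U →
    (∀ j ∉ U, j ≠ i₀ → S.Out (x j)) →
    x i₀ = Pi.single z 1 → G.dist z S.w = L →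
    (∀ j ∉ U, j ≠ i₀ → ∀ (u' v' : V) (r : ℝ), G.Adj u' v' → r ∈ Ioo (0:ℝ) 1 →
       x j = seg u' v' r →
       (L : ℝ) < min (G.dist u' S.w + (1 - r)) (G.dist v' S.w + r)) →
    ∃ x' br' pos', x' ∈ cspace G n ∧ S.Parked x' (insert i₀ U) br' pos' ∧
      JoinedIn (cspace G n) x x' ∧ ∀ j, j ≠ i₀ → x' j = x j := by
  classical
  intro L
  induction L using Nat.strong_induction_on with
  | _ L ih =>
  intro z x U br pos i₀ hx hP hiU hout hxi hdist hblock
  have hPj : ∀ j ∈ U, j ≠ i₀ → S.IsBr (br j) ∧ pos j ∈ Ioo (0:ℝ) 1 ∧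
      x j = seg S.w (br j) (pos j) := fun j hj _ => hP j hj
  by_cases hzw : z = S.w
  · -- park on top of branch `a`
    obtain ⟨p, hp, habove⟩ := exists_above (fun j hj => (hP j hj).2.1) S.a
    have hxi' : x i₀ = seg S.w S.a 1 := by rw [hxi, hzw, seg_one]
    have hmove : JoinedIn (cspace G n) x (Function.update x i₀ (seg S.w S.a p)) := by
      refine slideMove hx i₀ S.hwa (by norm_num) ⟨hp.1.le, hp.2.le⟩ hxi' ?_
      intro r hr j hj
      rw [uIcc_comm, uIcc_of_le hp.2.le] at hr
      exact S.avoid_branch hPj hout (Or.inl rfl) ⟨hp.1.le.trans hr.1, hr.2⟩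
        (fun j' hj' hji hbj => ne_of_lt (lt_of_lt_of_le (habove j' hj' hbj) hr.1)) j hj
    refine ⟨Function.update x i₀ (seg S.w S.a p), Function.update br i₀ S.a,
      Function.update pos i₀ p, hmove.target_mem, ?_, hmove,
      fun j hj => Function.update_of_ne hj _ _⟩
    intro j hj
    rcases Finset.mem_insert.1 hj with rfl | hjU
    · rw [Function.update_self, Function.update_self, Function.update_self]
      exact ⟨Or.inl rfl, hp, rfl⟩
    · have hji : j ≠ i₀ := fun hh => hiU (hh ▸ hjU)
      rw [Function.update_of_ne hji, Function.update_of_ne hji, Function.update_of_ne hji]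
      exact hP j hjU
  by_cases hzbr : S.IsBr z
  · -- park at the bottom of branch `z`
    obtain ⟨p, hp, hbelow⟩ := exists_below (fun j hj => (hP j hj).2.1) z
    have hxi' : x i₀ = seg S.w z 0 := by rw [hxi, seg_zero]
    have hmove : JoinedIn (cspace G n) x (Function.update x i₀ (seg S.w z p)) := by
      refine slideMove hx i₀ (S.adj_br hzbr) (by norm_num) ⟨hp.1.le, hp.2.le⟩ hxi' ?_
      intro r hr j hj
      rw [uIcc_of_le hp.1.le] at hr
      exact S.avoid_branch hPj hout hzbr ⟨hr.1, hr.2.trans hp.2.le⟩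
        (fun j' hj' hji hbj => ne_of_gt (lt_of_le_of_lt hr.2 (hbelow j' hj' hbj))) j hj
    refine ⟨Function.update x i₀ (seg S.w z p), Function.update br i₀ z,
      Function.update pos i₀ p, hmove.target_mem, ?_, hmove,
      fun j hj => Function.update_of_ne hj _ _⟩
    intro j hj
    rcases Finset.mem_insert.1 hj with rfl | hjU
    · rw [Function.update_self, Function.update_self, Function.update_self]
      exact ⟨hzbr, hp, rfl⟩
    · have hji : j ≠ i₀ := fun hh => hiU (hh ▸ hjU)
      rw [Function.update_of_ne hji, Function.update_of_ne hji, Function.update_of_ne hji]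
      exact hP j hjU
  · -- take one geodesic step towards `w`
    obtain ⟨z', hadj, hstep⟩ := exists_step hconn hzw
    have hL : 0 < L := hdist ▸ hconn.pos_dist_of_ne hzw
    have hxi' : x i₀ = seg z z' 1 := by rw [hxi, seg_one]
    have hmove : JoinedIn (cspace G n) x (Function.update x i₀ (seg z z' 0)) := by
      refine slideMove hx i₀ hadj (by norm_num) (by norm_num) hxi' ?_
      intro r hr j hj
      rw [uIcc_comm, uIcc_of_le (by norm_num : (0:ℝ) ≤ 1)] at hr
      by_cases hjU : j ∈ U
      · obtain ⟨hb, hpos, hxj⟩ := hP j hjU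
        rw [hxj]
        exact S.branch_ne_nonY' hb hpos hadj (fun h => hzw h.1) (fun h => hzbr h.2) hr
      · intro h
        rcases eq_or_lt_of_le hr.1 with h0 | h0
        · rw [← h0, seg_zero] at h
          exact S.out_ne_single (hout j hjU hj) z' h
        rcases eq_or_lt_of_le hr.2 with h1 | h1
        · rw [h1, seg_one] at h
          exact S.out_ne_single (hout j hjU hj) z h
        have hb := hblock j hjU hj z z' r hadj ⟨h0, h1⟩ h
        have hc : (G.dist z' S.w : ℝ) + 1 = (L : ℝ) := by
          rw [← hdist]; exact_mod_cast congrArg (Nat.cast : ℕ → ℝ) hstep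
        have := min_le_right ((G.dist z S.w : ℝ) + (1 - r)) ((G.dist z' S.w : ℝ) + r)
        rw [hdist] at hb
        linarith [lt_of_lt_of_le hb (min_le_right _ _)]
    set x₁ := Function.update x i₀ (seg z z' 0) with hx₁def
    have hx₁ : x₁ ∈ cspace G n := hmove.target_mem
    have hx₁j : ∀ j, j ≠ i₀ → x₁ j = x j := fun j hj => Function.update_of_ne hj _ _
    have hx₁i : x₁ i₀ = Pi.single z' 1 := by
      rw [hx₁def, Function.update_self, seg_zero]
    have hP₁ : S.Parked x₁ U br pos := by
      intro j hj
      have hji : j ≠ i₀ := fun hh => hiU (hh ▸ hj)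
      rw [hx₁j j hji]; exact hP j hj
    have hout₁ : ∀ j ∉ U, j ≠ i₀ → S.Out (x₁ j) := by
      intro j hj hji; rw [hx₁j j hji]; exact hout j hj hji
    have hstep' : G.dist z' S.w < L := by omega
    have hblock₁ : ∀ j ∉ U, j ≠ i₀ → ∀ (u' v' : V) (r : ℝ), G.Adj u' v' →
        r ∈ Ioo (0:ℝ) 1 → x₁ j = seg u' v' r →
        ((G.dist z' S.w : ℕ) : ℝ) < min (G.dist u' S.w + (1 - r)) (G.dist v' S.w + r) := by
      intro j hj hji u' v' r hadj' hr hxj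
      rw [hx₁j j hji] at hxj
      have hb := hblock j hj hji u' v' r hadj' hr hxj
      have hc : (G.dist z' S.w : ℝ) < (L : ℝ) := by exact_mod_cast hstep'
      linarith
    obtain ⟨x', br', pos', hx', hP', hJ, hpres⟩ :=
      ih (G.dist z' S.w) hstep' z' x₁ U br pos i₀ hx₁ hP₁ hiU hout₁ hx₁i rfl hblock₁
    exact ⟨x', br', pos', hx', hP', hmove.trans hJ,
      fun j hj => (hpres j hj).trans (hx₁j j hj)⟩


/-- the "distance to `w'`" of a point does not depend on the chosen edge description. -/
lemma min_welldef {u v u' v' : V} {t r : ℝ} (huv : u ≠ v) (hu'v' : u' ≠ v')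
    (ht : t ∈ Ioo (0:ℝ) 1) (hr : r ∈ Ioo (0:ℝ) 1) (h : seg u v t = seg u' v' r) (w' : V) :
    min ((G.dist u w' : ℝ) + (1 - t)) ((G.dist v w' : ℝ) + t) =
      min ((G.dist u' w' : ℝ) + (1 - r)) ((G.dist v' w' : ℝ) + r) := by
  rcases seg_eq_seg huv hu'v' ht hr h with ⟨rfl, rfl, rfl⟩ | ⟨e1, e2, e3⟩
  · rfl
  · subst e1; subst e2; subst e3
    rw [min_comm]
    congr 1 <;> ring

/-- Bring the minimal outside token `i₀` into the star. -/
lemma gatherStep (hconn : G.Connected) {x : Fin n → V → ℝ} {U : Finset (Fin n)}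
    {br : Fin n → V} {pos : Fin n → ℝ} (i₀ : Fin n)
    (hx : x ∈ cspace G n) (hP : S.Parked x U br pos) (hiU : i₀ ∉ U)
    (hout : ∀ j ∉ U, j ≠ i₀ → S.Out (x j))
    {u v : V} {t : ℝ} (hadj : G.Adj u v) (h1 : ¬(u = S.w ∧ S.IsBr v))
    (h2 : ¬(v = S.w ∧ S.IsBr u)) (ht : t ∈ Ioo (0:ℝ) 1) (hxi : x i₀ = seg u v t)
    (hmin : ∀ j ∉ U, j ≠ i₀ → ∀ (u' v' : V) (r : ℝ), G.Adj u' v' → r ∈ Ioo (0:ℝ) 1 →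
       x j = seg u' v' r →
       (G.dist u S.w : ℝ) + (1 - t) ≤ min ((G.dist u' S.w : ℝ) + (1 - r))
         ((G.dist v' S.w : ℝ) + r)) :
    ∃ x' br' pos', x' ∈ cspace G n ∧ S.Parked x' (insert i₀ U) br' pos' ∧
      JoinedIn (cspace G n) x x' ∧ ∀ j, j ≠ i₀ → x' j = x j := by
  classical
  -- step A : slide within the current edge to the exit vertex u
  have hmove : JoinedIn (cspace G n) x (Function.update x i₀ (seg u v 1)) := by
    refine slideMove hx i₀ hadj ⟨ht.1.le, ht.2.le⟩ (by norm_num) hxi ?_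
    intro r hr j hj
    rw [uIcc_of_le ht.2.le] at hr
    by_cases hjU : j ∈ U
    · obtain ⟨hb, hpos, hxj⟩ := hP j hjU
      rw [hxj]
      exact S.branch_ne_nonY' hb hpos hadj h1 h2 ⟨ht.1.le.trans hr.1, hr.2⟩
    · intro h
      rcases eq_or_lt_of_le hr.2 with h1' | h1'
      · rw [h1', seg_one] at h
        exact S.out_ne_single (hout j hjU hj) u h
      have hrin : r ∈ Ioo (0:ℝ) 1 := ⟨ht.1.trans_le hr.1, h1'⟩
      have hb := hmin j hjU hj u v r hadj hrin h
      have h2' := min_le_left ((G.dist u S.w : ℝ) + (1 - r)) ((G.dist v S.w : ℝ) + r)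
      have hrt : r ≤ t := by linarith
      have hrt' : r = t := le_antisymm hrt hr.1
      rw [hrt'] at h
      exact hj (hx.2 (h.trans hxi.symm))
  set x₁ := Function.update x i₀ (seg u v 1) with hx₁def
  have hx₁ : x₁ ∈ cspace G n := hmove.target_mem
  have hx₁j : ∀ j, j ≠ i₀ → x₁ j = x j := fun j hj => Function.update_of_ne hj _ _
  have hx₁i : x₁ i₀ = Pi.single u 1 := by rw [hx₁def, Function.update_self, seg_one]
  have hP₁ : S.Parked x₁ U br pos := by
    intro j hj
    have hji : j ≠ i₀ := fun hh => hiU (hh ▸ hj)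
    rw [hx₁j j hji]; exact hP j hj
  have hout₁ : ∀ j ∉ U, j ≠ i₀ → S.Out (x₁ j) := by
    intro j hj hji; rw [hx₁j j hji]; exact hout j hj hji
  have hblock : ∀ j ∉ U, j ≠ i₀ → ∀ (u' v' : V) (r : ℝ), G.Adj u' v' →
      r ∈ Ioo (0:ℝ) 1 → x₁ j = seg u' v' r →
      ((G.dist u S.w : ℕ) : ℝ) < min ((G.dist u' S.w : ℝ) + (1 - r))
        ((G.dist v' S.w : ℝ) + r) := by
    intro j hj hji u' v' r hadj' hr hxj
    rw [hx₁j j hji] at hxj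
    have hb := hmin j hj hji u' v' r hadj' hr hxj
    have := ht.2
    linarith
  obtain ⟨x', br', pos', hx', hP', hJ, hpres⟩ :=
    S.routeTo hconn (G.dist u S.w) u x₁ U br pos i₀ hx₁ hP₁ hiU hout₁ hx₁i rfl hblock
  exact ⟨x', br', pos', hx', hP', hmove.trans hJ,
    fun j hj => (hpres j hj).trans (hx₁j j hj)⟩

/-- Bring all outside tokens into the star. -/
lemma gather (hconn : G.Connected) :
    ∀ (m : ℕ) (x : Fin n → V → ℝ) (U : Finset (Fin n)) (br : Fin n → V) (pos : Fin n → ℝ),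
    x ∈ cspace G n → S.Parked x U br pos → (∀ j ∉ U, S.Out (x j)) → Uᶜ.card = m →
    ∃ x' br' pos', x' ∈ cspace G n ∧ S.Parked x' Finset.univ br' pos' ∧
      JoinedIn (cspace G n) x x' := by
  classical
  intro m
  induction m with
  | zero =>
    intro x U br pos hx hP hout hm
    have hU : U = Finset.univ := by
      have := Finset.card_eq_zero.1 hm
      rwa [Finset.compl_eq_empty_iff] at this
    exact ⟨x, br, pos, hx, hU ▸ hP, JoinedIn.refl hx⟩
  | succ m ih =>
    intro x U br pos hx hP hout hm
    have hne : Uᶜ.Nonempty := Finset.card_pos.1 (by omega)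
    have hdesc : ∀ j : Fin n, ∃ (u v : V) (t : ℝ), j ∉ U →
        G.Adj u v ∧ ¬(u = S.w ∧ S.IsBr v) ∧ ¬(v = S.w ∧ S.IsBr u) ∧
        t ∈ Ioo (0:ℝ) 1 ∧ x j = seg u v t := by
      intro j
      by_cases hj : j ∈ U
      · exact ⟨S.w, S.w, 0, fun h => absurd hj h⟩
      · obtain ⟨u, v, hh1, hh2, hh3, t, htt, hee⟩ := hout j hj
        exact ⟨u, v, t, fun _ => ⟨hh1, hh2, hh3, htt, hee⟩⟩
    choose du dv dt hd using hdesc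
    set ρ : Fin n → ℝ := fun j =>
      min ((G.dist (du j) S.w : ℝ) + (1 - dt j)) ((G.dist (dv j) S.w : ℝ) + dt j) with hρ
    obtain ⟨i₀, hi₀, hmin⟩ := Finset.exists_min_image Uᶜ ρ hne
    have hi₀U : i₀ ∉ U := Finset.mem_compl.1 hi₀
    obtain ⟨hadj, hc1, hc2, htt, hxi⟩ := hd i₀ hi₀U
    have hout' : ∀ j ∉ U, j ≠ i₀ → S.Out (x j) := fun j hj _ => hout j hj
    have key : ∀ j ∉ U, j ≠ i₀ → ∀ (u' v' : V) (r : ℝ), G.Adj u' v' →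
        r ∈ Ioo (0:ℝ) 1 → x j = seg u' v' r →
        ρ i₀ ≤ min ((G.dist u' S.w : ℝ) + (1 - r)) ((G.dist v' S.w : ℝ) + r) := by
      intro j hj hji u' v' r hadj' hr hxj
      obtain ⟨hadjj, -, -, htj, hxj'⟩ := hd j hj
      have hwd := min_welldef (G := G) hadjj.ne hadj'.ne htj hr (hxj'.symm.trans hxj) S.w
      rw [hρ]
      calc min ((G.dist (du i₀) S.w : ℝ) + (1 - dt i₀)) ((G.dist (dv i₀) S.w : ℝ) + dt i₀)
          ≤ ρ j := hmin j (Finset.mem_compl.2 hj)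
        _ = _ := hwd
    obtain ⟨x₁, br₁, pos₁, hx₁, hP₁, hJ₁, hpres⟩ : ∃ x' br' pos', x' ∈ cspace G n ∧
        S.Parked x' (insert i₀ U) br' pos' ∧ JoinedIn (cspace G n) x x' ∧
        ∀ j, j ≠ i₀ → x' j = x j := by
      rcases le_total ((G.dist (du i₀) S.w : ℝ) + (1 - dt i₀))
        ((G.dist (dv i₀) S.w : ℝ) + dt i₀) with hAB | hAB
      · refine S.gatherStep hconn i₀ hx hP hi₀U hout' hadj hc1 hc2 htt hxi ?_
        intro j hj hji u' v' r hadj' hr hxj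
        have := key j hj hji u' v' r hadj' hr hxj
        rw [hρ] at this
        calc (G.dist (du i₀) S.w : ℝ) + (1 - dt i₀)
            = min ((G.dist (du i₀) S.w : ℝ) + (1 - dt i₀))
              ((G.dist (dv i₀) S.w : ℝ) + dt i₀) := (min_eq_left hAB).symm
          _ ≤ _ := this
      · have hxi' : x i₀ = seg (dv i₀) (du i₀) (1 - dt i₀) := by
          rw [hxi, seg_symm]
        refine S.gatherStep hconn i₀ hx hP hi₀U hout' hadj.symm hc2 hc1
          ⟨by linarith [htt.2], by linarith [htt.1]⟩ hxi' ?_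
        intro j hj hji u' v' r hadj' hr hxj
        have := key j hj hji u' v' r hadj' hr hxj
        rw [hρ] at this
        calc (G.dist (dv i₀) S.w : ℝ) + (1 - (1 - dt i₀))
            = (G.dist (dv i₀) S.w : ℝ) + dt i₀ := by ring
          _ = min ((G.dist (du i₀) S.w : ℝ) + (1 - dt i₀))
              ((G.dist (dv i₀) S.w : ℝ) + dt i₀) := (min_eq_right hAB).symm
          _ ≤ _ := this
    have hout₁ : ∀ j ∉ insert i₀ U, S.Out (x₁ j) := by
      intro j hj
      have hji : j ≠ i₀ := fun hh => hj (hh ▸ Finset.mem_insert_self i₀ U)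
      have hjU : j ∉ U := fun hh => hj (Finset.mem_insert_of_mem hh)
      rw [hpres j hji]; exact hout j hjU
    have hcard : (insert i₀ U)ᶜ.card = m := by
      have h1 : (insert i₀ U).card = U.card + 1 := Finset.card_insert_of_notMem hi₀U
      have h2 := Finset.card_compl (insert i₀ U)
      have h3 := Finset.card_compl U
      have h4 : U.card ≤ Fintype.card (Fin n) := Finset.card_le_univ U
      omega
    obtain ⟨x', br', pos', hx', hP', hJ⟩ :=
      ih x₁ (insert i₀ U) br₁ pos₁ hx₁ hP₁ hout₁ hcard
    exact ⟨x', br', pos', hx', hP', hJ₁.trans hJ⟩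


include S

lemma exists_nbr (hconn : G.Connected) (z : V) : ∃ z', G.Adj z z' := by
  by_cases h : z = S.w
  · exact ⟨S.a, h ▸ S.hwa⟩
  · obtain ⟨z', hadj, -⟩ := exists_step hconn h
    exact ⟨z', hadj⟩

open scoped Classical in
/-- Perturb the configuration so that no token sits at a vertex. -/
lemma offVertices (hconn : G.Connected) :
    ∀ (m : ℕ) (x : Fin n → V → ℝ), x ∈ cspace G n →
    (Finset.univ.filter fun i => ∃ z : V, x i = Pi.single z 1).card ≤ m →
    ∃ x', x' ∈ cspace G n ∧ JoinedIn (cspace G n) x x' ∧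
      ∀ i, ∃ (u v : V) (t : ℝ), G.Adj u v ∧ t ∈ Ioo (0:ℝ) 1 ∧ x' i = seg u v t := by
  have done : ∀ x : Fin n → V → ℝ, x ∈ cspace G n →
      (Finset.univ.filter fun i => ∃ z : V, x i = Pi.single z 1) = ∅ →
      ∀ i, ∃ (u v : V) (t : ℝ), G.Adj u v ∧ t ∈ Ioo (0:ℝ) 1 ∧ x i = seg u v t := by
    intro x hx hE i
    have hnv : ¬∃ z : V, x i = Pi.single z 1 := by
      intro h
      have : i ∈ Finset.univ.filter fun i => ∃ z : V, x i = Pi.single z 1 :=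
        Finset.mem_filter.2 ⟨Finset.mem_univ i, h⟩
      rw [hE] at this
      exact absurd this (Finset.notMem_empty i)
    obtain ⟨u, v, hadj, t, ht, heq⟩ := hx.1 i
    have heq' : x i = seg u v t := heq
    rcases eq_or_lt_of_le ht.1 with h0 | h0
    · exact absurd ⟨v, by rw [heq', ← h0, seg_zero]⟩ hnv
    rcases eq_or_lt_of_le ht.2 with h1 | h1
    · exact absurd ⟨u, by rw [heq', h1, seg_one]⟩ hnv
    · exact ⟨u, v, t, hadj, ⟨h0, h1⟩, heq'⟩
  intro m
  induction m with
  | zero =>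
    intro x hx hcard
    exact ⟨x, hx, JoinedIn.refl hx, done x hx (Finset.card_eq_zero.1 (by omega))⟩
  | succ m ih =>
    intro x hx hcard
    rcases Finset.eq_empty_or_nonempty
      (Finset.univ.filter fun i => ∃ z : V, x i = Pi.single z 1) with hE | hE
    · exact ⟨x, hx, JoinedIn.refl hx, done x hx hE⟩
    obtain ⟨i, hi⟩ := hE
    obtain ⟨-, z, hxi⟩ := Finset.mem_filter.1 hi
    obtain ⟨z', hadj⟩ := S.exists_nbr hconn z
    set T : Finset ℝ :=
      insert (0:ℝ) ((Finset.univ.erase i).image fun j => x j z) with hT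
    have hTne : T.Nonempty := ⟨0, Finset.mem_insert_self _ _⟩
    set M := T.max' hTne with hM
    have hM1 : M < 1 := by
      rw [hM, Finset.max'_lt_iff]
      intro y hy
      rcases Finset.mem_insert.1 hy with rfl | hy
      · norm_num
      · obtain ⟨j, hj, rfl⟩ := Finset.mem_image.1 hy
        have hji : j ≠ i := (Finset.mem_erase.1 hj).1
        obtain ⟨hle, h1⟩ := coord_le (hx.1 j) z
        refine lt_of_le_of_ne hle fun hc => ?_
        exact hji (hx.2 (by rw [h1 hc, hxi]))
    have hM0 : (0:ℝ) ≤ M := Finset.le_max' _ _ (Finset.mem_insert_self _ _)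
    have hs₁ : (M + 1) / 2 ∈ Ioo (0:ℝ) 1 := ⟨by linarith, by linarith⟩
    have hxi' : x i = seg z z' 1 := by rw [hxi, seg_one]
    have hmove : JoinedIn (cspace G n) x
        (Function.update x i (seg z z' ((M + 1) / 2))) := by
      refine slideMove hx i hadj (by norm_num) ⟨hs₁.1.le, hs₁.2.le⟩ hxi' ?_
      intro r hr j hj h
      rw [uIcc_comm, uIcc_of_le hs₁.2.le] at hr
      have hval := congrFun h z
      rw [seg_apply_left hadj.ne] at hval
      have hmem : x j z ∈ T := by
        rw [hT]
        exact Finset.mem_insert_of_mem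
          (Finset.mem_image.2 ⟨j, Finset.mem_erase.2 ⟨hj, Finset.mem_univ j⟩, rfl⟩)
      have hle : x j z ≤ M := Finset.le_max' T _ hmem
      have := hr.1
      linarith
    set x₁ := Function.update x i (seg z z' ((M + 1) / 2)) with hx₁def
    have hx₁ : x₁ ∈ cspace G n := hmove.target_mem
    have hsub : (Finset.univ.filter fun j => ∃ y : V, x₁ j = Pi.single y 1) ⊆
        (Finset.univ.filter fun j => ∃ y : V, x j = Pi.single y 1).erase i := by
      intro j hj
      obtain ⟨-, y, hy⟩ := Finset.mem_filter.1 hj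
      have hji : j ≠ i := by
        rintro rfl
        rw [hx₁def, Function.update_self] at hy
        exact seg_ne_single hadj.ne hs₁ hy
      rw [hx₁def, Function.update_of_ne hji] at hy
      exact Finset.mem_erase.2 ⟨hji, Finset.mem_filter.2 ⟨Finset.mem_univ j, y, hy⟩⟩
    have hcard₁ : (Finset.univ.filter fun j => ∃ y : V, x₁ j = Pi.single y 1).card ≤ m := by
      have h1 := Finset.card_le_card hsub
      have h2 := Finset.card_erase_of_mem hi
      omega
    obtain ⟨x', hx', hJ, hdesc⟩ := ih x₁ hx₁ hcard₁
    exact ⟨x', hx', hmove.trans hJ, hdesc⟩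

open scoped Classical in
/-- Split an everywhere-interior configuration into parked and outside tokens. -/
lemma toParked {x : Fin n → V → ℝ} (hx : x ∈ cspace G n)
    (hdesc : ∀ i, ∃ (u v : V) (t : ℝ), G.Adj u v ∧ t ∈ Ioo (0:ℝ) 1 ∧ x i = seg u v t) :
    ∃ U br pos, S.Parked x U br pos ∧ ∀ j ∉ U, S.Out (x j) := by
  choose du dv dt hadj ht hxe using hdesc
  refine ⟨Finset.univ.filter (fun i => (du i = S.w ∧ S.IsBr (dv i)) ∨
    (dv i = S.w ∧ S.IsBr (du i))),
    fun i => if du i = S.w then dv i else du i,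
    fun i => if du i = S.w then dt i else 1 - dt i, ?_, ?_⟩
  · intro i hi
    rcases (Finset.mem_filter.1 hi).2 with ⟨h1, h2⟩ | ⟨h1, h2⟩
    · simp only [if_pos h1]
      exact ⟨h2, ht i, by rw [hxe i, h1]⟩
    · have hne : du i ≠ S.w := by
        intro hc
        exact (hadj i).ne (hc.trans h1.symm)
      simp only [if_neg hne]
      refine ⟨h2, ⟨by linarith [(ht i).2], by linarith [(ht i).1]⟩, ?_⟩
      rw [hxe i, seg_symm, h1]
  · intro j hj
    rw [Finset.mem_filter, not_and_or] at hj
    push_neg at hj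
    rcases hj with hj | hj
    · exact absurd (Finset.mem_univ j) hj
    · exact ⟨du j, dv j, hadj j, fun h => hj.1 h.1 h.2, fun h => hj.2 h.1 h.2,
        dt j, ht j, hxe j⟩

/-- Main lemma: every configuration is joined to the canonical one. -/
lemma joined_canon (hconn : G.Connected) {x : Fin n → V → ℝ} (hx : x ∈ cspace G n) :
    JoinedIn (cspace G n) x (canon S n) := by
  classical
  obtain ⟨x₁, hx₁, hJ₁, hdesc⟩ := S.offVertices hconn _ x hx (le_refl _)
  obtain ⟨U, br, pos, hP, hout⟩ := S.toParked hx₁ hdesc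
  obtain ⟨x₂, br₂, pos₂, hx₂, hP₂, hJ₂⟩ :=
    S.gather hconn Uᶜ.card x₁ U br pos hx₁ hP hout rfl
  exact hJ₁.trans (hJ₂.trans (S.toCanon hx₂ hP₂))

end Star

end

end GraphCfg

/-- Let `Γ` be a finite connected graph having at least one essential vertex
(a vertex of valence ≥ 3).  Then for every `n ≥ 1` the ordered configuration space
`F(Γ, n)` of `n` pairwise distinct points on `Γ` is path-connected. -/
theorem graph_config_space_pathConnected
    [Fintype V] [DecidableEq V] (G : SimpleGraph V) [DecidableRel G.Adj]
    (hconn : G.Connected) (hess : ∃ v : V, 3 ≤ G.degree v)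
    (n : ℕ) (hn : 1 ≤ n) :
    IsPathConnected {x : Fin n → (V → ℝ) |
      (∀ i, x i ∈ graphRealization G) ∧ Function.Injective x} := by
  classical
  obtain ⟨w, hw⟩ := hess
  have hcard : 3 ≤ (G.neighborFinset w).card := by
    rwa [G.card_neighborFinset_eq_degree]
  obtain ⟨a, ha⟩ := Finset.card_pos.1 (by omega : 0 < (G.neighborFinset w).card)
  have h2 : 0 < ((G.neighborFinset w).erase a).card := by
    have := Finset.card_erase_of_mem ha; omega
  obtain ⟨b, hb⟩ := Finset.card_pos.1 h2
  obtain ⟨hba, hbn⟩ := Finset.mem_erase.1 hb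
  have h3 : 0 < (((G.neighborFinset w).erase a).erase b).card := by
    have h4 := Finset.card_erase_of_mem hb
    have h5 := Finset.card_erase_of_mem ha
    omega
  obtain ⟨c, hc⟩ := Finset.card_pos.1 h3
  obtain ⟨hcb, hc2⟩ := Finset.mem_erase.1 hc
  obtain ⟨hca, hcn⟩ := Finset.mem_erase.1 hc2
  have hadja : G.Adj w a := (SimpleGraph.mem_neighborFinset G w a).1 ha
  have hadjb : G.Adj w b := (SimpleGraph.mem_neighborFinset G w b).1 hbn
  have hadjc : G.Adj w c := (SimpleGraph.mem_neighborFinset G w c).1 hcn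
  set S : GraphCfg.Star G := ⟨w, a, b, c, hadja, hadjb, hadjc,
    hba.symm, hca.symm, hcb.symm⟩
  have hmem : GraphCfg.Star.canon S n ∈ GraphCfg.cspace G n := S.canon_mem
  refine ⟨GraphCfg.Star.canon S n, hmem, ?_⟩
  intro y hy
  exact (S.joined_canon hconn (x := y) hy).symm
end
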